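/- arXiv:1404.1353 — 10 statements merged into one kernel-verified Lean document; each statement's English description precedes it below -/
import Mathlib

section
/- For every real number q with 1 < q ≤ 2, the function F(x) = x²/(1+x)^{2-q} is convex on the interval (-1, +∞). -/
/-!
Substituting `t = 1 + x` gives `x² (1 + x)^(q-2) = t^q - 2 t^(q-1) + t^(q-2)` for `t > 0`. When
`1 ≤ q ≤ 2` each term is convex: `t^q` because `q ≥ 1`, `-2 t^(q-1)` because `t^(q-1)` is concave for
`0 ≤ q - 1 ≤ 1`, and `t^(q-2)` because `q - 2 ≤ 0`.
-/

open Set Real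

theorem convexOn_rpow_of_nonpos {p : ℝ} (hp : p ≤ 0) :
    ConvexOn ℝ (Ioi 0) fun t : ℝ ↦ t ^ p := by
  -- `t ^ p = exp (log t * p)`: a nondecreasing convex function of a convex one.
  have hlog : ConvexOn ℝ (Ioi 0) fun t ↦ log t * p := by
    simpa [mul_comm] using strictConcaveOn_log_Ioi.concaveOn.neg.smul (neg_nonneg.2 hp)
  have hcont : ContinuousOn (fun t ↦ log t * p) (Ioi 0) :=
    (continuousOn_log.mono fun _ ht ↦ (mem_Ioi.1 ht).ne').mul continuousOn_const
  have hexp : ConvexOn ℝ ((fun t ↦ log t * p) '' Ioi 0) exp :=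
    convexOn_exp.subset (subset_univ _) (isPreconnected_Ioi.image _ hcont).convex
  refine (hexp.comp hlog (exp_monotone.monotoneOn _)).congr fun t ht ↦ ?_
  simp [rpow_def_of_pos (mem_Ioi.1 ht)]

theorem convexOn_sub_one_sq_mul_rpow {q : ℝ} (hq : 1 ≤ q) (hq2 : q ≤ 2) :
    ConvexOn ℝ (Ioi 0) fun t : ℝ ↦ (t - 1) ^ 2 * t ^ (q - 2) := by
  have h₁ : ConvexOn ℝ (Ioi 0) fun t : ℝ ↦ t ^ q :=
    (convexOn_rpow hq).subset Ioi_subset_Ici_self (convex_Ioi 0)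
  have h₂ : ConvexOn ℝ (Ioi 0) fun t : ℝ ↦ -(2 * t ^ (q - 1)) :=
    (((concaveOn_rpow (by linarith) (by linarith)).subset Ioi_subset_Ici_self
      (convex_Ioi 0)).smul zero_le_two).neg
  have h₃ : ConvexOn ℝ (Ioi 0) fun t : ℝ ↦ t ^ (q - 2) := convexOn_rpow_of_nonpos (by linarith)
  refine ((h₁.add h₂).add h₃).congr fun t ht ↦ ?_
  have ht : 0 < t := ht
  have e₁ : t ^ q = t ^ 2 * t ^ (q - 2) := by
    rw [← rpow_natCast, ← rpow_add ht]; norm_num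
  have e₂ : t ^ (q - 1) = t * t ^ (q - 2) := by
    rw [mul_comm, ← rpow_add_one ht.ne']; ring_nf
  simp only [Pi.add_apply, e₁, e₂]
  ring

theorem stmt2 (q : ℝ) (hq : 1 < q) (hq2 : q ≤ 2) :
    ConvexOn ℝ (Set.Ioi (-1 : ℝ)) (fun x : ℝ => x ^ 2 * (1 + x) ^ (q - 2)) := by
  have h := (convexOn_sub_one_sq_mul_rpow hq.le hq2).translate_right 1
  have hpre : (fun x : ℝ ↦ 1 + x) ⁻¹' Ioi 0 = Ioi (-1) := by
    ext x; simp [neg_lt_iff_pos_add']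
  rw [hpre] at h
  simpa [Function.comp_def] using h
end

section
/- For every real q ∈ (1,2] and every t ∈ (0,1), the function 𝓕_t(s) = s²/(1+ts)^{2-q} is convex on [-1, +∞). -/
/-! With `u = 1 + t s` and `p = q - 2`, the second derivative of `s ↦ s² uᵖ` is
`u^(p-2) (2 + 4(p+1) ts + (p+1)(p+2) (ts)²)`. For `-1 ≤ p ≤ 0` this quadratic in `ts` has
nonpositive discriminant `8 (p+1) p`, so the second derivative is nonnegative wherever `u > 0`,
which includes all of `[-1, ∞)` when `0 < t < 1`. -/

open Set

section SqMulRpowAffine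

variable {t p s : ℝ}

lemma hasDerivAt_sq_mul_rpow_affine (hs : 0 < 1 + t * s) :
    HasDerivAt (fun s => s ^ 2 * (1 + t * s) ^ p)
      (s * (1 + t * s) ^ (p - 1) * (2 + (p + 2) * (t * s))) s := by
  have hu : HasDerivAt (fun s => 1 + t * s) t s := by
    simpa using ((hasDerivAt_id s).const_mul t).const_add 1
  refine ((hasDerivAt_pow 2 s).mul (hu.rpow_const (p := p) (Or.inl hs.ne'))).congr_deriv ?_
  rw [Real.rpow_sub_one hs.ne']
  field_simp
  ring

lemma hasDerivAt_deriv_sq_mul_rpow_affine (hs : 0 < 1 + t * s) :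
    HasDerivAt (fun s => s * (1 + t * s) ^ (p - 1) * (2 + (p + 2) * (t * s)))
      ((1 + t * s) ^ (p - 2) *
        (2 + 4 * (p + 1) * (t * s) + (p + 1) * (p + 2) * (t * s) ^ 2)) s := by
  have hu : HasDerivAt (fun s => 1 + t * s) t s := by
    simpa using ((hasDerivAt_id s).const_mul t).const_add 1
  have hlin : HasDerivAt (fun s => 2 + (p + 2) * (t * s)) ((p + 2) * t) s := by
    simpa using (((hasDerivAt_id s).const_mul t).const_mul (p + 2)).const_add 2
  refine (((hasDerivAt_id' s).fun_mul (hu.rpow_const (p := p - 1) (Or.inl hs.ne'))).fun_mul hlin)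
    |>.congr_deriv ?_
  rw [show p - 1 - 1 = p - 2 by ring, show p - 1 = p - 2 + 1 by ring,
    Real.rpow_add_one hs.ne']
  ring

lemma two_add_mul_add_mul_sq_nonneg (hp₁ : -1 ≤ p) (hp₀ : p ≤ 0) (x : ℝ) :
    0 ≤ 2 + 4 * (p + 1) * x + (p + 1) * (p + 2) * x ^ 2 := by
  have key : (p + 2) * (2 + 4 * (p + 1) * x + (p + 1) * (p + 2) * x ^ 2)
      = (p + 1) * ((p + 2) * x + 2) ^ 2 - 2 * p := by ring
  have := mul_nonneg (neg_le_iff_add_nonneg.1 hp₁) (sq_nonneg ((p + 2) * x + 2))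
  nlinarith

lemma convexOn_sq_mul_rpow_affine (hp₁ : -1 ≤ p) (hp₀ : p ≤ 0) :
    ConvexOn ℝ {s | 0 < 1 + t * s} (fun s => s ^ 2 * (1 + t * s) ^ p) := by
  have hconv : Convex ℝ {s : ℝ | 0 < 1 + t * s} := by
    refine convex_iff_forall_pos.2
      fun x (hx : 0 < 1 + t * x) y (hy : 0 < 1 + t * y) a b ha hb hab => ?_
    show 0 < 1 + t * (a * x + b * y)
    nlinarith [mul_pos ha hx, mul_pos hb hy]
  have hinterior : interior {s : ℝ | 0 < 1 + t * s} = {s | 0 < 1 + t * s} :=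
    (isOpen_lt continuous_const (by fun_prop)).interior_eq
  refine convexOn_of_hasDerivWithinAt2_nonneg hconv
    (f' := fun s => s * (1 + t * s) ^ (p - 1) * (2 + (p + 2) * (t * s)))
    (f'' := fun s => (1 + t * s) ^ (p - 2) *
      (2 + 4 * (p + 1) * (t * s) + (p + 1) * (p + 2) * (t * s) ^ 2))
    (fun s hs => (hasDerivAt_sq_mul_rpow_affine hs).continuousAt.continuousWithinAt) ?_ ?_ ?_
  all_goals rw [hinterior]
  · exact fun s hs => (hasDerivAt_sq_mul_rpow_affine hs).hasDerivWithinAt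
  · exact fun s hs => (hasDerivAt_deriv_sq_mul_rpow_affine hs).hasDerivWithinAt
  · exact fun s hs => mul_nonneg (Real.rpow_nonneg hs.le _)
      (two_add_mul_add_mul_sq_nonneg hp₁ hp₀ _)

end SqMulRpowAffine

theorem stmt3 (q t : ℝ) (hq : 1 < q) (hq2 : q ≤ 2) (ht : t ∈ Set.Ioo (0 : ℝ) 1) :
    ConvexOn ℝ (Set.Ici (-1 : ℝ)) (fun s : ℝ => s ^ 2 * (1 + t * s) ^ (q - 2)) := by
  obtain ⟨ht₀, ht₁⟩ := ht
  have hsub : Ici (-1 : ℝ) ⊆ {s | 0 < 1 + t * s} := fun s (hs : -1 ≤ s) => by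
    show 0 < 1 + t * s
    nlinarith
  exact (convexOn_sq_mul_rpow_affine (by linarith) (by linarith)).subset hsub (convex_Ici _)
end

section
/- Let A be a linear operator on a vector space and k ∈ ℕ. Then I - A = 2^{-(k+1)}·(I - A^{2^{k+1}}) + ∑_{i=0}^{k} 2^{-(i+1)}·(I - A^{2^i})², where I is the identity operator. -/
/-! Since `(1 - B ^ 2) + (1 - B) ^ 2 = 2 • (1 - B)`, each term `1 - B` splits as
`2⁻¹ • (1 - B ^ 2) + 2⁻¹ • (1 - B) ^ 2`; applying this to `B = A ^ 2 ^ i` for `i = 0, …, k`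
and substituting each split into the previous one gives the identity. -/

section

variable {K R : Type*} [Field K] [Ring R] [Algebra K R]

lemma one_sub_eq_inv_two_smul_one_sub_sq_add (h2 : (2 : K) ≠ 0) (B : R) :
    1 - B = (2 : K)⁻¹ • (1 - B ^ 2) + (2 : K)⁻¹ • (1 - B) ^ 2 := by
  have hsum : (1 - B ^ 2) + (1 - B) ^ 2 = (2 : K) • (1 - B) := by
    rw [ofNat_smul_eq_nsmul (R := K), two_nsmul]
    noncomm_ring
  rw [← smul_add, hsum, smul_smul, inv_mul_cancel₀ h2, one_smul]

lemma one_sub_eq_dyadic_sum (h2 : (2 : K) ≠ 0) (A : R) (k : ℕ) :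
    1 - A = ((2 : K) ^ (k + 1))⁻¹ • (1 - A ^ (2 ^ (k + 1))) +
      ∑ i ∈ Finset.range (k + 1), ((2 : K) ^ (i + 1))⁻¹ • (1 - A ^ (2 ^ i)) ^ 2 := by
  induction k with
  | zero => simpa using one_sub_eq_inv_two_smul_one_sub_sq_add h2 A
  | succ k ih =>
    have hsplit : ((2 : K) ^ (k + 1))⁻¹ • (1 - A ^ (2 ^ (k + 1))) =
        ((2 : K) ^ (k + 2))⁻¹ • (1 - A ^ (2 ^ (k + 2))) +
          ((2 : K) ^ (k + 2))⁻¹ • (1 - A ^ (2 ^ (k + 1))) ^ 2 := by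
      conv_lhs => rw [one_sub_eq_inv_two_smul_one_sub_sq_add h2 (A ^ (2 ^ (k + 1)))]
      rw [← pow_mul, ← pow_succ, smul_add, smul_smul, smul_smul, ← mul_inv, ← pow_succ]
    rw [Finset.sum_range_succ, ih, hsplit]
    abel

end

theorem stmt6 {R : Type*} [Ring R] [Algebra ℝ R] (A : R) (k : ℕ) :
    1 - A = ((2 : ℝ) ^ (k + 1))⁻¹ • (1 - A ^ (2 ^ (k + 1))) +
      ∑ i ∈ Finset.range (k + 1), ((2 : ℝ) ^ (i + 1))⁻¹ • (1 - A ^ (2 ^ i)) ^ 2 :=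
  one_sub_eq_dyadic_sum two_ne_zero A k
end

section
/- Let β > 0 and η be the unique integer with η < β ≤ η + 1, and let (a_k)_{k≥0} be the (nonnegative) Taylor coefficients of (1-z)^{β-η-1}, i.e. ∑ a_k z^k = (1-z)^{β-η-1} for |z|<1. Then there is a constant C > 0 such that for all m ≥ 1, ∑_{k=0}^{m-1} a_k·(m-k)^{β-η-1} ≤ C. -/
/-!
Write the exponent `β - η - 1` as `-s` with `0 ≤ s < 1`. Comparing with the binomial series of
`(1 - z) ^ (-s)` identifies `a k` with `multichoose s k = s (s + 1) ⋯ (s + k - 1) / k!`, which by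
its recurrence and Bernoulli's inequality is at most `(k + 1) ^ (s - 1)`. For `s = 0` the sum
is `1`. Otherwise, since `(k + 1) + (m - k) = m + 1`, one of the two bases in
`(k + 1) ^ (s - 1) (m - k) ^ (-s)` is at least `(m + 1) / 2`; bounding that factor by its value
at `(m + 1) / 2` leaves sums of the form `∑ (k + 1) ^ (p - 1) ≤ m ^ p / p`, and the powers of `m`
cancel.
-/

open Finset FormalMultilinearSeries

theorem hasFPowerSeriesOnBall_ofScalars_of_hasSum {c : ℕ → ℝ} {f : ℝ → ℝ}
    (h : ∀ z : ℝ, |z| < 1 → HasSum (fun k ↦ c k * z ^ k) (f z)) :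
    HasFPowerSeriesOnBall f (ofScalars ℝ c) 0 1 where
  r_le := by
    refine ENNReal.le_of_forall_nnreal_lt fun r hr ↦ le_radius_of_summable _ ?_
    have hr1 : |(r : ℝ)| < 1 := by rw [NNReal.abs_eq]; exact_mod_cast hr
    simpa [ofScalars_norm, abs_mul, abs_pow] using (h r hr1).summable.abs
  r_pos := one_pos
  hasSum {y} hy := by
    have hy1 : |y| < 1 := by simpa [enorm_eq_nnnorm, ← NNReal.coe_lt_coe] using hy
    simpa [ofScalars_apply_eq, mul_comm] using h y hy1

theorem eq_multichoose_of_hasSum_one_sub_rpow {s : ℝ} {a : ℕ → ℝ}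
    (ha : ∀ z : ℝ, |z| < 1 → HasSum (fun k ↦ a k * z ^ k) ((1 - z) ^ (-s))) (n : ℕ) :
    a n = Ring.multichoose s n := by
  have hrpow : (fun z : ℝ ↦ 1 / (1 - z) ^ s) =ᶠ[nhds 0] fun z ↦ (1 - z) ^ (-s) := by
    filter_upwards [gt_mem_nhds one_pos] with z hz
    rw [Real.rpow_neg (by linarith), one_div]
  have hchoose :=
    (Real.one_div_one_sub_rpow_hasFPowerSeriesOnBall_zero s).hasFPowerSeriesAt.congr hrpow
  have hcoeff := ofScalars_series_injective ℝ ℝ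
    ((hasFPowerSeriesOnBall_ofScalars_of_hasSum ha).hasFPowerSeriesAt.eq_formalMultilinearSeries
      hchoose)
  rw [hcoeff, Ring.multichoose_eq]

theorem Ring.succ_mul_multichoose_succ {K : Type*} [Field K] [CharZero K] (r : K) (n : ℕ) :
    ((n : K) + 1) * multichoose r (n + 1) = (r + n) * multichoose r n := by
  have h := factorial_nsmul_multichoose_eq_ascPochhammer r (n + 1)
  rw [Polynomial.ascPochhammer_smeval_eq_eval, ascPochhammer_succ_eval,
    ← Polynomial.ascPochhammer_smeval_eq_eval,
    ← factorial_nsmul_multichoose_eq_ascPochhammer, Nat.factorial_succ] at h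
  simp only [nsmul_eq_mul, Nat.cast_mul, Nat.cast_succ] at h
  refine mul_left_cancel₀ (Nat.cast_ne_zero.2 n.factorial_ne_zero : (n.factorial : K) ≠ 0) ?_
  linear_combination h

theorem Real.sub_one_rpow_le {x p : ℝ} (hx : 1 ≤ x) (hp0 : 0 ≤ p) (hp1 : p ≤ 1) :
    (x - 1) ^ p ≤ x ^ p - p * x ^ (p - 1) := by
  have hx0 : 0 < x := by linarith
  have hx1 : -1 ≤ -x⁻¹ := by linarith [inv_le_one_of_one_le₀ hx]
  calc (x - 1) ^ p = x ^ p * (1 + -x⁻¹) ^ p := by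
        rw [← mul_rpow hx0.le (by linarith)]
        field_simp
        ring_nf
    _ ≤ x ^ p * (1 + p * -x⁻¹) := by gcongr; exact rpow_one_add_le_one_add_mul_self hx1 hp0 hp1
    _ = x ^ p - p * x ^ (p - 1) := by
        rw [rpow_sub_one hx0.ne']
        ring

theorem Real.add_sub_one_mul_rpow_sub_one_le {x s : ℝ} (hx : 1 ≤ x) (hs0 : 0 ≤ s) (hs1 : s ≤ 1) :
    (x - 1 + s) * x ^ (s - 1) ≤ x * (x + 1) ^ (s - 1) := by
  have hx0 : 0 < x := by linarith
  have hbern := sub_one_rpow_le (x := x + 1) (by linarith) hs0 hs1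
  have hB : (x + 1) ^ s = (x + 1) ^ (s - 1) * (x + 1) := by
    rw [rpow_sub_one (by linarith)]; field_simp
  rw [add_sub_cancel_right, hB] at hbern
  rw [rpow_sub_one hx0.ne', mul_div_assoc', div_le_iff₀ hx0]
  have hB0 : 0 ≤ (x + 1) ^ (s - 1) := by positivity
  nlinarith [mul_le_mul_of_nonneg_left hbern (by linarith : 0 ≤ x - 1 + s),
    mul_nonneg hB0 (sq_nonneg (1 - s))]

theorem Real.multichoose_le_add_one_rpow {s : ℝ} (hs0 : 0 ≤ s) (hs1 : s ≤ 1) (n : ℕ) :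
    Ring.multichoose s n ≤ ((n : ℝ) + 1) ^ (s - 1) := by
  induction n with
  | zero => simp
  | succ n ih =>
    have hn : (0 : ℝ) < n + 1 := by positivity
    refine le_of_mul_le_mul_left ?_ hn
    calc ((n : ℝ) + 1) * Ring.multichoose s (n + 1) = (s + n) * Ring.multichoose s n :=
          Ring.succ_mul_multichoose_succ s n
      _ ≤ ((n : ℝ) + 1 - 1 + s) * ((n : ℝ) + 1) ^ (s - 1) := by
          rw [add_sub_cancel_right, add_comm s]
          gcongr
      _ ≤ ((n : ℝ) + 1) * (((n + 1 : ℕ) : ℝ) + 1) ^ (s - 1) := by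
          push_cast
          exact add_sub_one_mul_rpow_sub_one_le (by linarith) hs0 hs1

theorem Real.sum_range_add_one_rpow_sub_one_le {p : ℝ} (hp0 : 0 < p) (hp1 : p ≤ 1) (m : ℕ) :
    ∑ k ∈ range m, ((k : ℝ) + 1) ^ (p - 1) ≤ (m : ℝ) ^ p / p := by
  have hterm (k : ℕ) : ((k : ℝ) + 1) ^ (p - 1) ≤ (((k + 1 : ℕ) : ℝ) ^ p - (k : ℝ) ^ p) / p := by
    rw [le_div_iff₀ hp0]
    have hbern := sub_one_rpow_le (x := (k : ℝ) + 1) (by simp) hp0.le hp1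
    push_cast
    rw [add_sub_cancel_right] at hbern
    linarith
  calc ∑ k ∈ range m, ((k : ℝ) + 1) ^ (p - 1)
      ≤ ∑ k ∈ range m, (((k + 1 : ℕ) : ℝ) ^ p - (k : ℝ) ^ p) / p := sum_le_sum fun k _ ↦ hterm k
    _ = (m : ℝ) ^ p / p := by
        rw [← sum_div, sum_range_sub (fun k : ℕ ↦ (k : ℝ) ^ p), Nat.cast_zero,
          zero_rpow hp0.ne', sub_zero]

theorem Real.rpow_sub_one_mul_rpow_neg_le {i j s : ℝ} (hi : 0 < i) (hj : 0 < j) (hs0 : 0 ≤ s)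
    (hs1 : s ≤ 1) :
    i ^ (s - 1) * j ^ (-s) ≤
      ((i + j) / 2) ^ (-s) * i ^ (s - 1) + ((i + j) / 2) ^ (s - 1) * j ^ (-s) := by
  have hM : 0 < (i + j) / 2 := by positivity
  rcases le_total i j with hij | hji
  · have : j ^ (-s) ≤ ((i + j) / 2) ^ (-s) :=
      rpow_le_rpow_of_nonpos hM (by linarith) (by linarith)
    have : 0 ≤ ((i + j) / 2) ^ (s - 1) * j ^ (-s) := by positivity
    nlinarith [rpow_nonneg hi.le (s - 1)]
  · have : i ^ (s - 1) ≤ ((i + j) / 2) ^ (s - 1) :=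
      rpow_le_rpow_of_nonpos hM (by linarith) (by linarith)
    have : 0 ≤ ((i + j) / 2) ^ (-s) * i ^ (s - 1) := by positivity
    nlinarith [rpow_nonneg hj.le (-s)]

theorem Real.half_rpow_neg_mul_rpow {x : ℝ} (hx : 0 < x) (p : ℝ) :
    (x / 2) ^ (-p) * x ^ p = 2 ^ p := by
  rw [rpow_neg (by positivity), div_rpow hx.le zero_le_two]
  have : 0 < x ^ p := by positivity
  field_simp

theorem Real.sum_mul_sub_rpow_neg_le {s : ℝ} (hs0 : 0 < s) (hs1 : s < 1) {b : ℕ → ℝ}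
    (hb : ∀ k, b k ≤ ((k : ℝ) + 1) ^ (s - 1)) (m : ℕ) :
    ∑ k ∈ range m, b k * ((m - k : ℕ) : ℝ) ^ (-s) ≤ 2 ^ s / s + 2 ^ (1 - s) / (1 - s) := by
  set N : ℝ := m + 1
  have hN : 0 < N := by positivity
  have hpt (k : ℕ) (hk : k ∈ range m) : b k * ((m - k : ℕ) : ℝ) ^ (-s) ≤
      (N / 2) ^ (-s) * ((k : ℝ) + 1) ^ (s - 1) + (N / 2) ^ (s - 1) * ((m - k : ℕ) : ℝ) ^ (-s) := by
    have hkm : k < m := mem_range.1 hk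
    have hsum : (k : ℝ) + 1 + ((m - k : ℕ) : ℝ) = N := by
      rw [Nat.cast_sub hkm.le]; ring
    calc b k * ((m - k : ℕ) : ℝ) ^ (-s) ≤ ((k : ℝ) + 1) ^ (s - 1) * ((m - k : ℕ) : ℝ) ^ (-s) := by
          gcongr
          exact hb k
      _ ≤ _ := hsum ▸ rpow_sub_one_mul_rpow_neg_le (by positivity)
            (by exact_mod_cast Nat.sub_pos_of_lt hkm) hs0.le hs1.le
  have hS1 : ∑ k ∈ range m, ((k : ℝ) + 1) ^ (s - 1) ≤ N ^ s / s :=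
    (sum_range_add_one_rpow_sub_one_le hs0 hs1.le m).trans (by gcongr; linarith)
  have hS2 : ∑ k ∈ range m, ((m - k : ℕ) : ℝ) ^ (-s) ≤ N ^ (1 - s) / (1 - s) := by
    have hreflect : ∑ k ∈ range m, ((m - k : ℕ) : ℝ) ^ (-s) =
        ∑ k ∈ range m, ((k : ℝ) + 1) ^ (1 - s - 1) := by
      rw [← sum_range_reflect]
      refine sum_congr rfl fun k hk ↦ ?_
      have hkm := mem_range.1 hk
      rw [sub_sub_cancel_left, show m - (m - 1 - k) = k + 1 by omega]
      push_cast; rfl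
    rw [hreflect]
    exact (sum_range_add_one_rpow_sub_one_le (by linarith) (by linarith) m).trans
      (by gcongr; linarith)
  calc ∑ k ∈ range m, b k * ((m - k : ℕ) : ℝ) ^ (-s)
      ≤ ∑ k ∈ range m, ((N / 2) ^ (-s) * ((k : ℝ) + 1) ^ (s - 1) +
          (N / 2) ^ (s - 1) * ((m - k : ℕ) : ℝ) ^ (-s)) := sum_le_sum hpt
    _ = (N / 2) ^ (-s) * ∑ k ∈ range m, ((k : ℝ) + 1) ^ (s - 1) +
          (N / 2) ^ (-(1 - s)) * ∑ k ∈ range m, ((m - k : ℕ) : ℝ) ^ (-s) := by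
        rw [sum_add_distrib, mul_sum, mul_sum, neg_sub]
    _ ≤ (N / 2) ^ (-s) * (N ^ s / s) + (N / 2) ^ (-(1 - s)) * (N ^ (1 - s) / (1 - s)) := by
        gcongr
    _ = 2 ^ s / s + 2 ^ (1 - s) / (1 - s) := by
        rw [mul_div_assoc', mul_div_assoc', half_rpow_neg_mul_rpow hN, half_rpow_neg_mul_rpow hN]

theorem stmt7_general (β : ℝ) (η : ℤ) (hη : (η : ℝ) < β) (hη2 : β ≤ (η : ℝ) + 1)
    (a : ℕ → ℝ)
    (ha : ∀ z : ℝ, |z| < 1 → HasSum (fun k : ℕ => a k * z ^ k) ((1 - z) ^ (β - (η : ℝ) - 1))) :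
    ∃ C : ℝ, 0 < C ∧ ∀ m : ℕ, 1 ≤ m →
      ∑ k ∈ Finset.range m, a k * ((m - k : ℕ) : ℝ) ^ (β - (η : ℝ) - 1) ≤ C := by
  obtain ⟨s, hs⟩ : ∃ s : ℝ, β - η - 1 = -s := ⟨η + 1 - β, by ring⟩
  rw [hs] at ha ⊢
  have ha_eq := eq_multichoose_of_hasSum_one_sub_rpow ha
  rcases (show 0 ≤ s by linarith).eq_or_lt with rfl | hs0
  · refine ⟨1, one_pos, fun m hm ↦ ?_⟩
    obtain ⟨m, rfl⟩ := Nat.exists_eq_add_of_le' hm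
    simp [sum_range_succ', ha_eq, Ring.multichoose_zero_succ]
  · have hs1 : s < 1 := by linarith
    refine ⟨2 ^ s / s + 2 ^ (1 - s) / (1 - s), by have := sub_pos.2 hs1; positivity,
      fun m _ ↦ Real.sum_mul_sub_rpow_neg_le hs0 hs1 (fun k ↦ ?_) m⟩
    exact (ha_eq k).trans_le (Real.multichoose_le_add_one_rpow hs0.le hs1.le k)

theorem stmt7 (β : ℝ) (hβ : 0 < β) (η : ℤ) (hη : (η : ℝ) < β) (hη2 : β ≤ (η : ℝ) + 1)
    (a : ℕ → ℝ) (ha0 : ∀ k, 0 ≤ a k)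
    (ha : ∀ z : ℝ, |z| < 1 → HasSum (fun k : ℕ => a k * z ^ k) ((1 - z) ^ (β - (η : ℝ) - 1))) :
    ∃ C : ℝ, 0 < C ∧ ∀ m : ℕ, 1 ≤ m →
      ∑ k ∈ Finset.range m, a k * ((m - k : ℕ) : ℝ) ^ (β - (η : ℝ) - 1) ≤ C :=
  stmt7_general β η hη hη2 a ha
end

section
/- Let β ∈ (-1/2, 0) and let (a_k)_{k≥0} be the Taylor coefficients of (1-z)^{β} (nonnegative, with a_k ≲ k^{-β-1}). Then there exists C > 0 such that for all m ≥ 1, ∑_{k=0}^{m-1} a_k·(m-k)^{β-1/2} ≤ C·m^{-1/2}. -/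
noncomputable def bc (β : ℝ) : ℕ → ℝ
  | 0 => 1
  | (k+1) => bc β k * ((k - β) / (k + 1))

lemma bc_pos {β : ℝ} (hβ2 : β < 0) : ∀ k, 0 < bc β k := by
  intro k
  induction k with
  | zero => norm_num [bc]
  | succ k ih =>
    have h1 : (0:ℝ) < (k:ℝ) - β := by
      have : (0:ℝ) ≤ (k:ℝ) := Nat.cast_nonneg k
      linarith
    have h2 : (0:ℝ) < (k:ℝ) + 1 := by positivity
    exact mul_pos ih (div_pos h1 h2)

lemma bc_rec (β : ℝ) (k : ℕ) : ((k:ℝ) + 1) * bc β (k+1) = ((k:ℝ) - β) * bc β k := by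
  have h2 : ((k:ℝ) + 1) ≠ 0 := by positivity
  show ((k:ℝ) + 1) * (bc β k * ((k - β) / (k + 1))) = _
  field_simp

lemma bc_le {β : ℝ} (hβ1 : -(1/2 : ℝ) < β) (hβ2 : β < 0) :
    ∀ k, bc β k ≤ ((k:ℝ) + 1) ^ (-(1 + β)) := by
  intro k
  induction k with
  | zero => simp [bc]
  | succ k ih =>
    have hx : (1:ℝ) ≤ (k:ℝ) + 1 := by
      have : (0:ℝ) ≤ (k:ℝ) := Nat.cast_nonneg k
      linarith
    set x : ℝ := (k:ℝ) + 1 with hxdef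
    set s : ℝ := 1 + β with hsdef
    have hx0 : (0:ℝ) < x := by linarith
    have hs0 : (0:ℝ) ≤ s := by rw [hsdef]; linarith
    have hs1 : s ≤ 1 := by rw [hsdef]; linarith
    have hxs : (0:ℝ) ≤ x - s := by linarith
    have hkb : (k:ℝ) - β = x - s := by rw [hxdef, hsdef]; ring
    have hinvx : (0:ℝ) < 1/x := by positivity
    have hb : (1 + 1/x) ^ s ≤ 1 + s * (1/x) :=
      rpow_one_add_le_one_add_mul_self (by linarith) hs0 hs1
    have hpos1 : (0:ℝ) < 1 + 1/x := by linarith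
    have hbpos : (0:ℝ) < (1 + 1/x) ^ s := Real.rpow_pos_of_pos hpos1 s
    have key : (x - s)/x ≤ (1 + 1/x) ^ (-s) := by
      rw [Real.rpow_neg hpos1.le]
      have hxsp : (0:ℝ) < x + s := by linarith
      have h1 : (x - s)/x ≤ (1 + s * (1/x))⁻¹ := by
        have e : 1 + s * (1/x) = (x + s)/x := by field_simp
        rw [e, inv_div, div_le_div_iff₀ hx0 hxsp]
        nlinarith [sq_nonneg s]
      have h2 : (1 + s * (1/x))⁻¹ ≤ ((1 + 1/x) ^ s)⁻¹ :=
        inv_anti₀ hbpos hb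
      exact h1.trans h2
    have step : x ^ (-s) * ((x - s) / x) ≤ (x + 1) ^ (-s) := by
      have e1 : x + 1 = x * (1 + 1/x) := by field_simp
      rw [e1, Real.mul_rpow hx0.le hpos1.le]
      exact mul_le_mul_of_nonneg_left key (Real.rpow_nonneg hx0.le _)
    calc bc β (k+1) = bc β k * (((k:ℝ) - β) / ((k:ℝ) + 1)) := rfl
      _ ≤ x ^ (-s) * (((k:ℝ) - β) / ((k:ℝ) + 1)) := by
          apply mul_le_mul_of_nonneg_right ih
          rw [hkb]
          exact div_nonneg hxs hx0.le
      _ = x ^ (-s) * ((x - s) / x) := by rw [hkb]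
      _ ≤ (x + 1) ^ (-s) := step
      _ = (((k+1:ℕ):ℝ) + 1) ^ (-(1 + β)) := by rw [hxdef, hsdef]; push_cast; ring_nf

lemma bc_zero (β : ℝ) : bc β 0 = 1 := rfl

section
variable {β : ℝ}

lemma bc_le_one (hβ1 : -(1/2 : ℝ) < β) (hβ2 : β < 0) : ∀ k, bc β k ≤ 1 := by
  intro k
  refine (bc_le hβ1 hβ2 k).trans ?_
  apply Real.rpow_le_one_of_one_le_of_nonpos
  · have : (0:ℝ) ≤ (k:ℝ) := Nat.cast_nonneg k
    linarith
  · linarith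

lemma bc_summable (hβ1 : -(1/2 : ℝ) < β) (hβ2 : β < 0) {z : ℝ} (hz : |z| < 1) : Summable (fun k => bc β k * z ^ k) := by
  apply Summable.of_norm_bounded
    (summable_geometric_of_lt_one (abs_nonneg z) hz)
  intro k
  rw [norm_mul, norm_pow, Real.norm_eq_abs, Real.norm_eq_abs,
    abs_of_pos (bc_pos hβ2 k)]
  calc bc β k * |z| ^ k ≤ 1 * |z| ^ k :=
        mul_le_mul_of_nonneg_right (bc_le_one hβ1 hβ2 k) (by positivity)
    _ = |z| ^ k := one_mul _

noncomputable def gfun (β : ℝ) (z : ℝ) : ℝ := ∑' k, bc β k * z ^ k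

lemma deriv_summable {r : ℝ} (hr0 : 0 < r) (hr1 : r < 1) :
    Summable (fun k : ℕ => (k:ℝ) * r ^ (k-1)) := by
  rw [← summable_nat_add_iff 1]
  have h1 : Summable (fun j : ℕ => (j:ℝ) * r ^ j) := by
    simpa using summable_pow_mul_geometric_of_norm_lt_one 1
      (by rwa [Real.norm_eq_abs, abs_of_pos hr0])
  have h2 : Summable (fun j : ℕ => r ^ j) :=
    summable_geometric_of_lt_one hr0.le hr1
  have := h1.add h2
  apply this.congr
  intro j
  push_cast [Nat.add_sub_cancel]
  ring

lemma deriv_bound (hβ1 : -(1/2 : ℝ) < β) (hβ2 : β < 0) {r z : ℝ} (hzr : |z| ≤ r) (k : ℕ) :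
    ‖(k:ℝ) * bc β k * z ^ (k-1)‖ ≤ (k:ℝ) * r ^ (k-1) := by
  rw [norm_mul, norm_mul, Real.norm_eq_abs, Real.norm_eq_abs, Real.norm_eq_abs,
    Nat.abs_cast, abs_of_pos (bc_pos hβ2 k), abs_pow]
  refine le_trans (mul_le_mul (mul_le_mul_of_nonneg_left (bc_le_one hβ1 hβ2 k)
    (Nat.cast_nonneg k)) (pow_le_pow_left₀ (abs_nonneg z) hzr _)
    (by positivity) (by positivity)) (le_of_eq (by rw [mul_one]))

lemma gfun_hasDerivAt (hβ1 : -(1/2 : ℝ) < β) (hβ2 : β < 0) {z : ℝ} (hz : |z| < 1) :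
    HasDerivAt (gfun β) (∑' k : ℕ, (k:ℝ) * bc β k * z ^ (k-1)) z := by
  set r : ℝ := (1 + |z|) / 2 with hrdef
  have hr0 : 0 < r := by positivity
  have hzr : |z| < r := by rw [hrdef]; linarith
  have hr1 : r < 1 := by rw [hrdef]; linarith
  have hmem : z ∈ Set.Ioo (-r) r := abs_lt.mp hzr
  exact hasDerivAt_tsum_of_isPreconnected (deriv_summable hr0 hr1) isOpen_Ioo
    (convex_Ioo _ _).isPreconnected
    (fun k y _ => by
      simpa [mul_assoc, mul_comm, mul_left_comm] using (hasDerivAt_pow k y).const_mul (bc β k))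
    (fun k y hy => deriv_bound hβ1 hβ2 (le_of_lt (abs_lt.mpr ⟨hy.1, hy.2⟩)) k)
    (Set.mem_Ioo.mpr ⟨by linarith, hr0⟩)
    (bc_summable hβ1 hβ2 (by simpa using one_pos))
    hmem

end

lemma ode (hβ1 : -(1/2 : ℝ) < β) (hβ2 : β < 0) {z : ℝ} (hz : |z| < 1) :
    (1 - z) * (∑' k : ℕ, (k:ℝ) * bc β k * z ^ (k-1)) = -β * gfun β z := by
  set D : ℝ := ∑' k : ℕ, (k:ℝ) * bc β k * z ^ (k-1) with hD
  set f : ℕ → ℝ := fun k => (k:ℝ) * bc β k * z ^ (k-1) with hf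
  have hsumm : Summable f := by
    set r : ℝ := (1 + |z|) / 2 with hrdef
    have hr0 : 0 < r := by positivity
    have hzr : |z| ≤ r := by rw [hrdef]; linarith
    have hr1 : r < 1 := by rw [hrdef]; linarith
    exact Summable.of_norm_bounded (deriv_summable hr0 hr1)
      (fun k => deriv_bound hβ1 hβ2 hzr k)
  have hasD : HasSum f D := hsumm.hasSum
  have hf0 : f 0 = 0 := by simp [hf]
  have shift1 : HasSum (fun j : ℕ => f (j + 1)) D := by
    have h := (hasSum_nat_add_iff' (f := f) 1).mpr hasD
    simpa [hf0] using h
  have shift1' : HasSum (fun j : ℕ => ((j:ℝ) - β) * bc β j * z ^ j) D := by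
    apply shift1.congr_fun
    intro j
    show _ = f (j+1)
    rw [hf]
    simp only [Nat.add_sub_cancel]
    push_cast
    linear_combination (-(z ^ j)) * (bc_rec β j)
  have hzD : HasSum (fun k : ℕ => (k:ℝ) * bc β k * z ^ k) (z * D) := by
    have h1 : HasSum (fun j : ℕ => z * f (j + 1)) (z * D) := shift1.mul_left z
    have h3 : HasSum (fun j : ℕ => (fun k : ℕ => (k:ℝ) * bc β k * z ^ k) (j + 1)) (z * D) := by
      apply h1.congr_fun
      intro j
      simp only [hf, Nat.add_sub_cancel]
      push_cast
      ring
    have h4 := (hasSum_nat_add_iff (f := fun k : ℕ => (k:ℝ) * bc β k * z ^ k) 1).mp h3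
    simpa using h4
  have hg : HasSum (fun k : ℕ => bc β k * z ^ k) (gfun β z) :=
    (bc_summable hβ1 hβ2 hz).hasSum
  have hsub : HasSum (fun j : ℕ => -β * (bc β j * z ^ j)) (D - z * D) := by
    apply (shift1'.sub hzD).congr_fun
    intro j
    ring
  have huniq := (hg.mul_left (-β)).unique hsub
  rw [hD] at huniq ⊢
  linarith [huniq]

lemma hfun_hasDerivAt (hβ1 : -(1/2 : ℝ) < β) (hβ2 : β < 0) {w : ℝ} (hw : |w| < 1) :
    HasDerivAt (fun x => (1 - x) ^ (-β) * gfun β x) 0 w := by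
  have hw1 : 0 < 1 - w := by
    have := abs_lt.mp hw
    linarith [this.2]
  have hr : HasDerivAt (fun x : ℝ => (1 - x) ^ (-β)) (β * (1 - w) ^ (-β - 1)) w := by
    have hbase : HasDerivAt (fun x : ℝ => 1 - x) (-1) w := (hasDerivAt_id w).const_sub 1
    have := hbase.rpow_const (p := -β) (Or.inl hw1.ne')
    convert this using 1
    ring
  have hgd := gfun_hasDerivAt hβ1 hβ2 hw
  have hprod := hr.mul hgd
  refine hprod.congr_deriv ?_
  symm
  have hode := ode hβ1 hβ2 hw
  have e1 : (1 - w) ^ (-β) = (1 - w) ^ (-β - 1) * (1 - w) := by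
    rw [← Real.rpow_add_one hw1.ne' (-β - 1)]
    norm_num
  rw [e1]
  calc (0:ℝ) = (1 - w) ^ (-β - 1) * ((1 - w) * (∑' k : ℕ, (k:ℝ) * bc β k * w ^ (k-1)))
      + (1 - w) ^ (-β - 1) * (- ((-β) * gfun β w)) := by
        rw [hode]; ring
    _ = β * (1 - w) ^ (-β - 1) * gfun β w
      + (1 - w) ^ (-β - 1) * (1 - w) * (∑' k : ℕ, (k:ℝ) * bc β k * w ^ (k-1)) := by ring

lemma gfun_zero (β : ℝ) : gfun β 0 = 1 := by
  rw [gfun]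
  rw [tsum_eq_single 0 (fun k hk => by simp [zero_pow hk])]
  simp [bc_zero]

lemma gfun_eq (hβ1 : -(1/2 : ℝ) < β) (hβ2 : β < 0) {z : ℝ} (hz : |z| < 1) :
    gfun β z = (1 - z) ^ β := by
  have hz1 : 0 < 1 - z := by
    have := abs_lt.mp hz
    linarith [this.2]
  set h : ℝ → ℝ := fun x => (1 - x) ^ (-β) * gfun β x with hh
  have hd : ∀ x ∈ Set.Ioo (-1 : ℝ) 1, HasDerivAt h 0 x := fun x hx =>
    hfun_hasDerivAt hβ1 hβ2 (abs_lt.mpr ⟨hx.1, hx.2⟩)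
  have key : ∀ u v : ℝ, u ∈ Set.Ioo (-1:ℝ) 1 → v ∈ Set.Ioo (-1:ℝ) 1 → u < v → h u = h v := by
    intro u v hu hv huv
    obtain ⟨c, hc, hceq⟩ := exists_hasDerivAt_eq_slope h (fun _ => (0:ℝ)) huv
      (fun x hx => (hd x ⟨lt_of_lt_of_le hu.1 hx.1, lt_of_le_of_lt hx.2 hv.2⟩).continuousAt.continuousWithinAt)
      (fun x hx => hd x ⟨hu.1.trans hx.1, hx.2.trans hv.2⟩)
    have hne : v - u ≠ 0 := sub_ne_zero.mpr (ne_of_gt huv)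
    rcases div_eq_zero_iff.mp hceq.symm with h1 | h1
    · linarith
    · exact absurd h1 hne
  have hz1' : z ∈ Set.Ioo (-1:ℝ) 1 := by
    have := abs_lt.mp hz
    exact ⟨this.1, this.2⟩
  have h01 : (0:ℝ) ∈ Set.Ioo (-1:ℝ) 1 := by norm_num
  have hconst : h z = h 0 := by
    rcases lt_trichotomy z 0 with hz0 | hz0 | hz0
    · exact key z 0 hz1' h01 hz0
    · rw [hz0]
    · exact (key 0 z h01 hz1' hz0).symm
  have h0 : h 0 = 1 := by
    rw [hh]
    simp [gfun_zero, Real.one_rpow]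
  have hz' : (1 - z) ^ (-β) * gfun β z = 1 := by
    have := hconst.trans h0
    exact this
  have hne : (1 - z) ^ (-β) ≠ 0 := (Real.rpow_pos_of_pos hz1 _).ne'
  have : gfun β z = ((1 - z) ^ (-β))⁻¹ := by
    field_simp at hz' ⊢
    linarith [hz']
  rw [this, ← Real.rpow_neg hz1.le, neg_neg]

lemma bc_hasSum (hβ1 : -(1/2 : ℝ) < β) (hβ2 : β < 0) {z : ℝ} (hz : |z| < 1) :
    HasSum (fun k : ℕ => bc β k * z ^ k) ((1 - z) ^ β) := by
  rw [← gfun_eq hβ1 hβ2 hz]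
  exact (bc_summable hβ1 hβ2 hz).hasSum

lemma coeff_unique {β : ℝ} (hβ1 : -(1/2 : ℝ) < β) (hβ2 : β < 0)
    (a : ℕ → ℝ) (ha0 : ∀ k, 0 ≤ a k)
    (ha : ∀ z : ℝ, |z| < 1 → HasSum (fun k : ℕ => a k * z ^ k) ((1 - z) ^ β)) :
    ∀ k, a k = bc β k := by
  -- bound on a k
  have hhalf : |(1/2 : ℝ)| < 1 := by rw [abs_of_pos]; norm_num; norm_num
  have hA : ∀ k, a k ≤ (2:ℝ) * 2 ^ k := by
    intro k
    have h1 : a k * (1/2:ℝ) ^ k ≤ ((1:ℝ) - 1/2) ^ β :=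
      le_hasSum (ha (1/2) hhalf) k (fun j _ => mul_nonneg (ha0 j) (by positivity))
    have h2 : ((1:ℝ) - 1/2) ^ β = (2:ℝ) ^ (-β) := by
      rw [show ((1:ℝ) - 1/2) = (2:ℝ)⁻¹ by norm_num, Real.inv_rpow (by norm_num),
        ← Real.rpow_neg (by norm_num)]
    have h3 : (2:ℝ) ^ (-β) ≤ 2 := by
      calc (2:ℝ) ^ (-β) ≤ (2:ℝ) ^ (1:ℝ) :=
            Real.rpow_le_rpow_of_exponent_le one_le_two (by linarith)
        _ = 2 := Real.rpow_one 2
    have h4 : a k * (1/2:ℝ) ^ k ≤ 2 := by rw [h2] at h1; linarith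
    have h5 : (0:ℝ) < (1/2:ℝ) ^ k := by positivity
    calc a k = (a k * (1/2:ℝ)^k) * 2^k := by
          rw [mul_assoc, ← mul_pow]
          norm_num
      _ ≤ 2 * 2^k := by
          apply mul_le_mul_of_nonneg_right h4 (by positivity)
  have hd : ∀ k, |a k - bc β k| ≤ 3 * 2 ^ k := by
    intro k
    have h1 := bc_pos hβ2 k
    have h2 := bc_le_one hβ1 hβ2 k
    have h3 := hA k
    have h4 := ha0 k
    rw [abs_le]
    constructor
    · have : (1:ℝ) ≤ 2^k := one_le_pow₀ one_le_two
      nlinarith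
    · have : (1:ℝ) ≤ 2^k := one_le_pow₀ one_le_two
      nlinarith
  set d : ℕ → ℝ := fun k => a k - bc β k with hdd
  have hdz : ∀ z : ℝ, |z| < 1 → HasSum (fun k : ℕ => d k * z ^ k) 0 := by
    intro z hz
    have := (ha z hz).sub (bc_hasSum hβ1 hβ2 hz)
    simp only [sub_self] at this
    apply this.congr_fun
    intro k
    rw [hdd]
    ring
  -- strong induction
  have main : ∀ n, d n = 0 := by
    intro n
    induction n using Nat.strong_induction_on with
    | _ n ih =>
      -- for every ε in (0, 1/4], |d n| ≤ 12 * 2^n * ε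
      have hstep : ∀ ε : ℝ, 0 < ε → ε ≤ 1/4 → |d n| ≤ 12 * 2 ^ n * ε := by
        intro ε hε0 hε4
        have hε1 : |ε| < 1 := by rw [abs_of_pos hε0]; linarith
        have h1 := hdz ε hε1
        have h2 : HasSum (fun j : ℕ => d (j + n) * ε ^ (j + n)) 0 := by
          have := (hasSum_nat_add_iff' (f := fun k : ℕ => d k * ε ^ k) n).mpr h1
          have hzero : ∑ i ∈ Finset.range n, d i * ε ^ i = 0 := by
            apply Finset.sum_eq_zero
            intro i hi
            rw [ih i (Finset.mem_range.mp hi)]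
            ring
          rw [hzero, sub_zero] at this
          exact this
        have hεn : (0:ℝ) < ε ^ n := by positivity
        have h3 : HasSum (fun j : ℕ => d (j + n) * ε ^ j) 0 := by
          have := h2.div_const (ε ^ n)
          rw [zero_div] at this
          apply this.congr_fun
          intro j
          rw [pow_add]
          field_simp
        have h4 : HasSum (fun j : ℕ => d (j + 1 + n) * ε ^ (j + 1)) (-(d n)) := by
          have := (hasSum_nat_add_iff' (f := fun j : ℕ => d (j + n) * ε ^ j) 1).mpr h3
          simp only [Finset.range_one, Finset.sum_singleton, pow_zero, mul_one,
            zero_sub, Nat.zero_add, zero_add] at this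
          exact this
        -- bound the tail
        have hb : ∀ j : ℕ, |d (j + 1 + n) * ε ^ (j + 1)| ≤ (6 * 2^n * ε) * (1/2:ℝ)^j := by
          intro j
          rw [abs_mul, abs_pow, abs_of_pos hε0]
          calc |d (j+1+n)| * ε ^ (j+1) ≤ (3 * 2 ^ (j+1+n)) * ε ^ (j+1) := by
                apply mul_le_mul_of_nonneg_right (hd _) (by positivity)
            _ = (6 * 2^n * ε) * (2*ε)^j := by ring
            _ ≤ (6 * 2^n * ε) * (1/2:ℝ)^j := by
                apply mul_le_mul_of_nonneg_left _ (by positivity)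
                apply pow_le_pow_left₀ (by linarith) (by linarith)
        have hgsum : Summable (fun j : ℕ => (6 * 2^n * ε) * (1/2:ℝ)^j) :=
          (summable_geometric_of_lt_one (by norm_num) (by norm_num)).mul_left _
        have habs : Summable (fun j : ℕ => |d (j + 1 + n) * ε ^ (j + 1)|) :=
          Summable.of_nonneg_of_le (fun j => abs_nonneg _) hb hgsum
        have htsum : -(d n) = ∑' j : ℕ, d (j + 1 + n) * ε ^ (j + 1) := h4.tsum_eq.symm
        have habs' : Summable (fun j : ℕ => ‖d (j + 1 + n) * ε ^ (j + 1)‖) := by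
          simpa only [Real.norm_eq_abs] using habs
        have h5 : |d n| ≤ ∑' j : ℕ, |d (j + 1 + n) * ε ^ (j + 1)| := by
          have h5' := norm_tsum_le_tsum_norm habs'
          simp only [Real.norm_eq_abs] at h5'
          rw [← htsum, abs_neg] at h5'
          exact h5'
        have h6 : ∑' j : ℕ, |d (j + 1 + n) * ε ^ (j + 1)| ≤
            ∑' j : ℕ, (6 * 2^n * ε) * (1/2:ℝ)^j :=
          Summable.tsum_le_tsum hb habs hgsum
        have h7 : ∑' j : ℕ, (6 * 2^n * ε) * (1/2:ℝ)^j = (6 * 2^n * ε) * 2 := by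
          rw [tsum_mul_left, tsum_geometric_of_lt_one (by norm_num) (by norm_num)]
          norm_num
        calc |d n| ≤ (6 * 2^n * ε) * 2 := by rw [← h7]; exact h5.trans h6
          _ = 12 * 2^n * ε := by ring
      by_contra hne
      have hpos : 0 < |d n| := abs_pos.mpr hne
      set K : ℝ := 12 * 2 ^ n with hK
      have hKpos : 0 < K := by positivity
      set ε : ℝ := min (1/4) (|d n| / (2 * K)) with hε
      have hε0 : 0 < ε := lt_min (by norm_num) (by positivity)
      have hε4 : ε ≤ 1/4 := min_le_left _ _
      have := hstep ε hε0 hε4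
      have h8 : K * ε ≤ K * (|d n| / (2 * K)) :=
        mul_le_mul_of_nonneg_left (min_le_right _ _) hKpos.le
      have h9 : K * (|d n| / (2 * K)) = |d n| / 2 := by
        field_simp
      rw [h9] at h8
      linarith
  intro k
  have := main k
  rw [hdd] at this
  simp only at this
  linarith [this]

-- partial sums of p-series
lemma psum {p : ℝ} (hp0 : 0 < p) (hp1 : p ≤ 1) :
    ∀ m : ℕ, ∑ j ∈ Finset.range m, ((j:ℝ) + 1) ^ (p - 1) ≤ (m:ℝ) ^ p / p := by
  intro m
  induction m with
  | zero => simp [Real.zero_rpow hp0.ne']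
  | succ m ih =>
    rw [Finset.sum_range_succ]
    have key : p * ((m:ℝ) + 1) ^ (p - 1) ≤ ((m:ℝ) + 1) ^ p - (m:ℝ) ^ p := by
      rcases Nat.eq_zero_or_pos m with hm | hm
      · subst hm
        simp only [Nat.cast_zero, zero_add, Real.one_rpow, Real.zero_rpow hp0.ne']
        linarith
      · have hm1 : (1:ℝ) ≤ (m:ℝ) := by exact_mod_cast hm
        have hmlt : (m:ℝ) < (m:ℝ) + 1 := by linarith
        obtain ⟨c, hc, hceq⟩ := exists_hasDerivAt_eq_slope (fun x : ℝ => x ^ p)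
          (fun x => p * x ^ (p - 1)) hmlt
          (fun x hx => by
            have hx0 : x ≠ 0 := by
              have := hx.1
              intro h; rw [h] at this; linarith
            exact (Real.continuousAt_rpow_const x p (Or.inl hx0)).continuousWithinAt)
          (fun x hx => Real.hasDerivAt_rpow_const (Or.inl (by
            have := hx.1
            intro h; rw [h] at this; linarith)))
        have hc0 : 0 < c := by linarith [hc.1]
        have hce : p * c ^ (p - 1) = ((m:ℝ) + 1) ^ p - (m:ℝ) ^ p := by
          rw [hceq]
          field_simp
          ring
        rw [← hce]
        apply mul_le_mul_of_nonneg_left _ hp0.le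
        exact Real.rpow_le_rpow_of_nonpos hc0 hc.2.le (by linarith)
    have h2 : (m:ℝ)^p/p + ((m:ℝ)+1)^(p-1) ≤ ((m:ℝ)+1)^p/p := by
      rw [le_div_iff₀ hp0, add_mul, div_mul_cancel₀ _ hp0.ne']
      nlinarith [key]
    have hcast : ((m+1:ℕ):ℝ) = (m:ℝ) + 1 := by push_cast; ring
    rw [hcast]
    linarith [ih, h2]

lemma partial_sum_bound {β : ℝ} (hβ1 : -(1/2 : ℝ) < β) (hβ2 : β < 0)
    (a : ℕ → ℝ) (ha0 : ∀ k, 0 ≤ a k)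
    (ha : ∀ z : ℝ, |z| < 1 → HasSum (fun k : ℕ => a k * z ^ k) ((1 - z) ^ β))
    {m : ℕ} (hm : 1 ≤ m) : ∑ k ∈ Finset.range m, a k ≤ 4 * (m:ℝ) ^ (-β) := by
  have hm0 : (0:ℝ) < (m:ℝ) := by exact_mod_cast hm
  have hm1 : (1:ℝ) ≤ (m:ℝ) := by exact_mod_cast hm
  set z : ℝ := 1 - 1/(2*(m:ℝ)) with hzdef
  have hsmall0 : (0:ℝ) < 1/(2*(m:ℝ)) := by positivity
  have hsmall : 1/(2*(m:ℝ)) ≤ 1/2 := by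
    rw [div_le_div_iff₀ (by positivity) (by norm_num)]
    linarith
  have hz01 : (1/2:ℝ) ≤ z := by rw [hzdef]; linarith
  have hzlt : z < 1 := by rw [hzdef]; linarith
  have hzneg : (-1:ℝ) < z := lt_of_lt_of_le (by norm_num) hz01
  have hzabs : |z| < 1 := abs_lt.mpr ⟨hzneg, hzlt⟩
  have h := ha z hzabs
  have h1z : (1:ℝ) - z = 1/(2*(m:ℝ)) := by rw [hzdef]; ring
  have upper : ∑ k ∈ Finset.range m, a k * z ^ k ≤ (1 - z) ^ β :=
    sum_le_hasSum _ (fun k _ => mul_nonneg (ha0 k) (by positivity)) h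
  have bern : (1/2:ℝ) ≤ z ^ m := by
    have hB := one_add_mul_le_pow (a := -(1/(2*(m:ℝ)))) (by linarith) m
    have e1 : 1 + (m:ℝ) * (-(1/(2*(m:ℝ)))) = 1/2 := by
      field_simp
      ring
    have e2 : (1 + -(1/(2*(m:ℝ)))) = z := by rw [hzdef]; ring
    rw [e1, e2] at hB
    exact hB
  have lower : (∑ k ∈ Finset.range m, a k) * z ^ m ≤ ∑ k ∈ Finset.range m, a k * z ^ k := by
    rw [Finset.sum_mul]
    apply Finset.sum_le_sum
    intro k hk
    apply mul_le_mul_of_nonneg_left _ (ha0 k)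
    exact pow_le_pow_of_le_one (le_trans (by norm_num) hz01) hzlt.le (Finset.mem_range.mp hk).le
  have hS0 : 0 ≤ ∑ k ∈ Finset.range m, a k := Finset.sum_nonneg (fun k _ => ha0 k)
  have step : (∑ k ∈ Finset.range m, a k) * (1/2) ≤ (1 - z) ^ β := by
    calc (∑ k ∈ Finset.range m, a k) * (1/2) ≤ (∑ k ∈ Finset.range m, a k) * z ^ m :=
          mul_le_mul_of_nonneg_left bern hS0
      _ ≤ ∑ k ∈ Finset.range m, a k * z ^ k := lower
      _ ≤ (1 - z) ^ β := upper
  have rhs : (1 - z) ^ β ≤ 2 * (m:ℝ) ^ (-β) := by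
    rw [h1z, show (1:ℝ)/(2*(m:ℝ)) = (2*(m:ℝ))⁻¹ by ring, Real.inv_rpow (by positivity),
      ← Real.rpow_neg (by positivity), Real.mul_rpow (by norm_num) hm0.le]
    apply mul_le_mul_of_nonneg_right _ (Real.rpow_nonneg hm0.le _)
    calc (2:ℝ) ^ (-β) ≤ (2:ℝ) ^ (1:ℝ) :=
          Real.rpow_le_rpow_of_exponent_le one_le_two (by linarith)
      _ = 2 := Real.rpow_one 2
  linarith

theorem stmt8 (β : ℝ) (hβ1 : -(1/2 : ℝ) < β) (hβ2 : β < 0)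
    (a : ℕ → ℝ) (ha0 : ∀ k, 0 ≤ a k)
    (ha : ∀ z : ℝ, |z| < 1 → HasSum (fun k : ℕ => a k * z ^ k) ((1 - z) ^ β)) :
    ∃ C : ℝ, 0 < C ∧ ∀ m : ℕ, 1 ≤ m →
      ∑ k ∈ Finset.range m, a k * ((m - k : ℕ) : ℝ) ^ (β - 1/2) ≤ C * (m : ℝ) ^ (-(1/2) : ℝ) := by
  have hab : ∀ k, a k = bc β k := coeff_unique hβ1 hβ2 a ha0 ha
  have haK : ∀ k, a k ≤ ((k:ℝ) + 1) ^ (-(1 + β)) := fun k => (hab k) ▸ bc_le hβ1 hβ2 k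
  set p : ℝ := β + 1/2 with hpdef
  have hp0 : 0 < p := by rw [hpdef]; linarith
  have hp1 : p ≤ 1 := by rw [hpdef]; linarith
  refine ⟨2/p + 8, by positivity, ?_⟩
  intro m hm
  have hm0 : (0:ℝ) < (m:ℝ) := by exact_mod_cast hm
  have hq : β - 1/2 = p - 1 := by rw [hpdef]; ring
  -- pointwise bound
  have pointwise : ∀ k ∈ Finset.range m,
      a k * ((m - k : ℕ) : ℝ) ^ (β - 1/2) ≤
        2 * (m:ℝ) ^ (-(1+β)) * ((m - k : ℕ) : ℝ) ^ (β - 1/2)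
          + 2 * (m:ℝ) ^ (β - 1/2) * a k := by
    intro k hk
    have hkm : k < m := Finset.mem_range.mp hk
    have hBpos : (0:ℝ) < ((m - k : ℕ) : ℝ) := by
      have : 0 < m - k := by omega
      exact_mod_cast this
    have hBq0 : (0:ℝ) ≤ ((m - k : ℕ) : ℝ) ^ (β - 1/2) := Real.rpow_nonneg hBpos.le _
    have hsumAB : ((k:ℝ) + 1) + ((m - k : ℕ) : ℝ) = (m:ℝ) + 1 := by
      rw [Nat.cast_sub hkm.le]
      ring
    rcases le_or_gt ((m:ℝ)/2) ((k:ℝ)+1) with hc | hc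
    · have h1 : a k ≤ 2 * (m:ℝ) ^ (-(1+β)) := by
        refine (haK k).trans ?_
        refine (Real.rpow_le_rpow_of_nonpos (by positivity) hc (by linarith)).trans ?_
        rw [show (m:ℝ)/2 = (m:ℝ) * 2⁻¹ by ring, Real.mul_rpow hm0.le (by norm_num), mul_comm]
        apply mul_le_mul_of_nonneg_right _ (Real.rpow_nonneg hm0.le _)
        rw [Real.inv_rpow (by norm_num), ← Real.rpow_neg (by norm_num), neg_neg]
        calc (2:ℝ) ^ (1+β) ≤ (2:ℝ) ^ (1:ℝ) :=
              Real.rpow_le_rpow_of_exponent_le one_le_two (by linarith)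
          _ = 2 := Real.rpow_one 2
      have h2 : a k * ((m - k : ℕ) : ℝ) ^ (β - 1/2)
          ≤ (2 * (m:ℝ) ^ (-(1+β))) * ((m - k : ℕ) : ℝ) ^ (β - 1/2) :=
        mul_le_mul_of_nonneg_right h1 hBq0
      have h3 : (0:ℝ) ≤ 2 * (m:ℝ) ^ (β - 1/2) * a k :=
        mul_nonneg (by positivity) (ha0 k)
      linarith
    · have hcB : (m:ℝ)/2 ≤ ((m - k : ℕ) : ℝ) := by linarith
      have h1 : ((m - k : ℕ) : ℝ) ^ (β - 1/2) ≤ 2 * (m:ℝ) ^ (β - 1/2) := by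
        refine (Real.rpow_le_rpow_of_nonpos (by positivity) hcB (by linarith)).trans ?_
        rw [show (m:ℝ)/2 = (m:ℝ) * 2⁻¹ by ring, Real.mul_rpow hm0.le (by norm_num), mul_comm]
        apply mul_le_mul_of_nonneg_right _ (Real.rpow_nonneg hm0.le _)
        rw [Real.inv_rpow (by norm_num), ← Real.rpow_neg (by norm_num)]
        calc (2:ℝ) ^ (-(β - 1/2)) ≤ (2:ℝ) ^ (1:ℝ) :=
              Real.rpow_le_rpow_of_exponent_le one_le_two (by linarith)
          _ = 2 := Real.rpow_one 2
      have h2 : a k * ((m - k : ℕ) : ℝ) ^ (β - 1/2) ≤ a k * (2 * (m:ℝ) ^ (β - 1/2)) :=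
        mul_le_mul_of_nonneg_left h1 (ha0 k)
      have h3 : (0:ℝ) ≤ 2 * (m:ℝ) ^ (-(1+β)) * ((m - k : ℕ) : ℝ) ^ (β - 1/2) :=
        mul_nonneg (by positivity) hBq0
      linarith
  -- sum the pointwise bound
  have hsum1 : ∑ k ∈ Finset.range m, a k * ((m - k : ℕ) : ℝ) ^ (β - 1/2) ≤
      2 * (m:ℝ) ^ (-(1+β)) * (∑ k ∈ Finset.range m, ((m - k : ℕ) : ℝ) ^ (β - 1/2))
        + 2 * (m:ℝ) ^ (β - 1/2) * (∑ k ∈ Finset.range m, a k) := by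
    rw [Finset.mul_sum, Finset.mul_sum, ← Finset.sum_add_distrib]
    exact Finset.sum_le_sum pointwise
  -- reflect the sum
  have hrefl : ∑ k ∈ Finset.range m, ((m - k : ℕ) : ℝ) ^ (β - 1/2) ≤ (m:ℝ) ^ p / p := by
    have e := Finset.sum_range_reflect (fun j => ((j:ℝ) + 1) ^ (p - 1)) m
    have e2 : ∑ k ∈ Finset.range m, ((m - k : ℕ) : ℝ) ^ (β - 1/2)
        = ∑ j ∈ Finset.range m, (((m - 1 - j : ℕ):ℝ) + 1) ^ (p - 1) := by
      apply Finset.sum_congr rfl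
      intro k hk
      have hkm : k < m := Finset.mem_range.mp hk
      have : ((m - k : ℕ) : ℝ) = ((m - 1 - k : ℕ):ℝ) + 1 := by
        have : m - k = (m - 1 - k) + 1 := by omega
        rw [this]
        push_cast
        ring
      rw [this, hq]
    rw [e2, e]
    exact psum hp0 hp1 m
  have hSsum : ∑ k ∈ Finset.range m, a k ≤ 4 * (m:ℝ) ^ (-β) :=
    partial_sum_bound hβ1 hβ2 a ha0 ha hm
  have hfinal : 2 * (m:ℝ) ^ (-(1+β)) * ((m:ℝ) ^ p / p) + 2 * (m:ℝ) ^ (β - 1/2) * (4 * (m:ℝ) ^ (-β))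
      = (2/p + 8) * (m:ℝ) ^ (-(1/2) : ℝ) := by
    have e1 : (m:ℝ) ^ (-(1+β)) * (m:ℝ) ^ p = (m:ℝ) ^ (-(1/2) : ℝ) := by
      rw [← Real.rpow_add hm0]
      congr 1
      rw [hpdef]; ring
    have e2 : (m:ℝ) ^ (β - 1/2) * (m:ℝ) ^ (-β) = (m:ℝ) ^ (-(1/2) : ℝ) := by
      rw [← Real.rpow_add hm0]
      congr 1
      ring
    calc 2 * (m:ℝ) ^ (-(1+β)) * ((m:ℝ) ^ p / p) + 2 * (m:ℝ) ^ (β - 1/2) * (4 * (m:ℝ) ^ (-β))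
        = (2/p) * ((m:ℝ) ^ (-(1+β)) * (m:ℝ) ^ p) + 8 * ((m:ℝ) ^ (β - 1/2) * (m:ℝ) ^ (-β)) := by
          ring
      _ = (2/p + 8) * (m:ℝ) ^ (-(1/2) : ℝ) := by rw [e1, e2]; ring
  have hmono1 : 2 * (m:ℝ) ^ (-(1+β)) * (∑ k ∈ Finset.range m, ((m - k : ℕ) : ℝ) ^ (β - 1/2))
      ≤ 2 * (m:ℝ) ^ (-(1+β)) * ((m:ℝ) ^ p / p) :=
    mul_le_mul_of_nonneg_left hrefl (by positivity)
  have hmono2 : 2 * (m:ℝ) ^ (β - 1/2) * (∑ k ∈ Finset.range m, a k)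
      ≤ 2 * (m:ℝ) ^ (β - 1/2) * (4 * (m:ℝ) ^ (-β)) :=
    mul_le_mul_of_nonneg_left hSsum (by positivity)
  linarith [hsum1, hmono1, hmono2, hfinal.le, hfinal.ge]
end

section
/- Let M > 0 and let Ẽ_M be the set of nonnegative sequences (a_n)_{n≥1} such that a_n ≤ M·∑_{k≥n} a_k/k for all n (with the sums finite). Let (λ_n)_{n≥1} be a positive nondecreasing sequence such that (λ_n/n) is nonincreasing, and define ρ_λ(a)_n = (λ_n/λ_{n+1})·a_{n+1}. Then ρ_λ maps Ẽ_M into Ẽ_M. -/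
/-!
Write `b = ρ_λ(a)`. Since `λ` is nondecreasing, `b_n ≤ a_{n+1}`; since `λ_n / n` is
nonincreasing, `λ_n / λ_{n+1} ≥ n / (n + 1)`, i.e. `a_{n+1} / (n + 1) ≤ b_n / n`. Hence
`b_n ≤ a_{n+1} ≤ M ∑_{k > n} a_k / k ≤ M ∑_{k ≥ n} b_k / k`, and `b_n / n ≤ 2 a_{n+1} / (n + 1)`
gives the summability.
-/

noncomputable def rho (lam a : ℕ → ℝ) (n : ℕ) : ℝ := lam n / lam (n + 1) * a (n + 1)

/-- `a ∈ Ẽ_M`; the sequence is indexed from `1`, so `a 0` plays no role. -/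
def MemE (M : ℝ) (a : ℕ → ℝ) : Prop :=
  Summable (fun k : ℕ => a (k + 1) / (k + 1)) ∧
    ∀ n : ℕ, 1 ≤ n → 0 ≤ a n ∧ a n ≤ M * ∑' i : ℕ, a (n + i) / (n + i)

section Rho

variable {lam a : ℕ → ℝ} {n : ℕ}

lemma rho_nonneg (hlam : 0 < lam n) (hlam' : 0 < lam (n + 1)) (ha : 0 ≤ a (n + 1)) :
    0 ≤ rho lam a n :=
  mul_nonneg (div_nonneg hlam.le hlam'.le) ha

lemma rho_le (hlam' : 0 < lam (n + 1)) (hmono : lam n ≤ lam (n + 1)) (ha : 0 ≤ a (n + 1)) :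
    rho lam a n ≤ a (n + 1) :=
  mul_le_of_le_one_left ha (div_le_one_of_le₀ hmono hlam'.le)

lemma div_succ_le_rho_div (hn : 1 ≤ n) (hlam' : 0 < lam (n + 1))
    (hdiv : lam (n + 1) / (n + 1) ≤ lam n / n) (ha : 0 ≤ a (n + 1)) :
    a (n + 1) / ↑(n + 1) ≤ rho lam a n / n := by
  have hn' : (0 : ℝ) < n := by exact_mod_cast hn
  have hratio : (n : ℝ) / (n + 1) ≤ lam n / lam (n + 1) := by
    rw [div_le_div_iff₀ (by positivity) hn'] at hdiv
    rw [div_le_div_iff₀ (by positivity) hlam']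
    linarith
  calc a (n + 1) / ↑(n + 1) = (n : ℝ) / (n + 1) * a (n + 1) / n := by
        push_cast; field_simp
    _ ≤ rho lam a n / n := by
        unfold rho; gcongr

lemma rho_div_le (hn : 1 ≤ n) (hlam' : 0 < lam (n + 1)) (hmono : lam n ≤ lam (n + 1))
    (ha : 0 ≤ a (n + 1)) : rho lam a n / n ≤ 2 * (a (n + 1) / ↑(n + 1)) := by
  have hn' : (1 : ℝ) ≤ n := by exact_mod_cast hn
  calc rho lam a n / n ≤ a (n + 1) / n := by gcongr; exact rho_le hlam' hmono ha
    _ ≤ 2 * (a (n + 1) / ↑(n + 1)) := by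
        rw [mul_div_assoc', div_le_div_iff₀ (by positivity) (by positivity)]
        push_cast
        nlinarith

end Rho

theorem memE_rho {M : ℝ} (hM : 0 ≤ M) {a lam : ℕ → ℝ}
    (hlam_pos : ∀ n : ℕ, 1 ≤ n → 0 < lam n)
    (hlam_mono : ∀ n : ℕ, 1 ≤ n → lam n ≤ lam (n + 1))
    (hlam_div : ∀ n : ℕ, 1 ≤ n → lam (n + 1) / (n + 1) ≤ lam n / n)
    (ha : MemE M a) : MemE M (rho lam a) := by
  obtain ⟨hsum, ha⟩ := ha
  have hlam_succ : ∀ n, 1 ≤ n → 0 < lam (n + 1) := fun n hn => hlam_pos _ (by omega)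
  have ha_succ : ∀ n, 1 ≤ n → 0 ≤ a (n + 1) := fun n hn => (ha _ (by omega)).1
  have ha_div : Summable (fun k : ℕ => a k / k) :=
    (summable_nat_add_iff 1).1 (by simpa only [Nat.cast_add, Nat.cast_one] using hsum)
  have hrho_succ_div : Summable (fun k : ℕ => rho lam a (k + 1) / ↑(k + 1)) := by
    refine Summable.of_nonneg_of_le (fun k => ?_) (fun k => ?_)
      (((summable_nat_add_iff 2).2 ha_div).mul_left 2)
    · exact div_nonneg (rho_nonneg (hlam_pos _ (by omega)) (hlam_succ _ (by omega))
        (ha_succ _ (by omega))) (Nat.cast_nonneg _)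
    · exact rho_div_le (by omega) (hlam_succ _ (by omega)) (hlam_mono _ (by omega))
        (ha_succ _ (by omega))
  have hrho_div : Summable (fun k : ℕ => rho lam a k / k) :=
    (summable_nat_add_iff 1).1 hrho_succ_div
  refine ⟨by simpa only [Nat.cast_add, Nat.cast_one] using hrho_succ_div, fun n hn => ?_⟩
  refine ⟨rho_nonneg (hlam_pos n hn) (hlam_succ n hn) (ha_succ n hn), ?_⟩
  have tail : ∑' i, a (n + 1 + i) / ↑(n + 1 + i) ≤ ∑' i, rho lam a (n + i) / ↑(n + i) := by
    refine Summable.tsum_le_tsum (fun i => ?_)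
      (ha_div.comp_injective (add_right_injective (n + 1)))
      (hrho_div.comp_injective (add_right_injective n))
    rw [Nat.add_right_comm]
    exact div_succ_le_rho_div (by omega) (hlam_succ _ (by omega))
      (by exact_mod_cast hlam_div (n + i) (by omega)) (ha_succ _ (by omega))
  calc rho lam a n ≤ a (n + 1) := rho_le (hlam_succ n hn) (hlam_mono n hn) (ha_succ n hn)
    _ ≤ M * ∑' i : ℕ, a (n + 1 + i) / (↑(n + 1) + i) := (ha (n + 1) (by omega)).2
    _ ≤ M * ∑' i : ℕ, rho lam a (n + i) / (n + i) := by
        simpa only [Nat.cast_add] using mul_le_mul_of_nonneg_left tail hM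

theorem stmt10 (M : ℝ) (hM : 0 < M) (a lam : ℕ → ℝ)
    (hlam_pos : ∀ n : ℕ, 1 ≤ n → 0 < lam n)
    (hlam_mono : ∀ n : ℕ, 1 ≤ n → lam n ≤ lam (n + 1))
    (hlam_div : ∀ n : ℕ, 1 ≤ n → lam (n + 1) / (n + 1) ≤ lam n / n)
    (ha0 : ∀ n : ℕ, 1 ≤ n → 0 ≤ a n)
    (hsum : Summable (fun k : ℕ => a (k + 1) / (k + 1)))
    (ha : ∀ n : ℕ, 1 ≤ n → a n ≤ M * ∑' i : ℕ, a (n + i) / (n + i)) :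
    Summable (fun k : ℕ => (lam (k + 1) / lam (k + 2)) * a (k + 2) / (k + 1)) ∧
    ∀ n : ℕ, 1 ≤ n →
      0 ≤ (lam n / lam (n + 1)) * a (n + 1) ∧
      (lam n / lam (n + 1)) * a (n + 1) ≤
        M * ∑' i : ℕ, (lam (n + i) / lam (n + i + 1)) * a (n + i + 1) / (n + i) :=
  memE_rho hM.le hlam_pos hlam_mono hlam_div ⟨hsum, fun n hn => ⟨ha0 n hn, ha n hn⟩⟩
end

section
/- Let n ≥ 1 be an integer and c > 0. There exists C > 0 such that for all integers j ≥ 2 and r ≥ 1, ∑_{m=1}^{∞} sup_{0≤s≤nr²} exp(-c·4^j r²/(m+s))·(m+s)^{-(1+n)} ≤ C·4^{-jn}·r^{-2n}. -/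
/-!
Put `A = c 4^j r²`. Uniformly in `s`, the term with `t = m + 1 + s ≥ m + 1` is at most
`(n+1)! e / (A + m + 1)^(n+1)`, because `(1 + x)^(n+1) e^(-x) ≤ (n+1)! e` at `x = A / t`.
The discrete analogue of `∫_A^∞ u^(-(n+1)) du = 1 / (n A^n)`, namely the telescoping bound
`n / (x + 1)^(n+1) ≤ 1 / x^n - 1 / (x + 1)^n`, then sums these to `(n+1)! e / (n A^n)`,
and `A^n = c^n 4^(jn) r^(2n)`.
-/

open Finset Real Nat

lemma one_add_pow_mul_exp_neg_le (N : ℕ) {x : ℝ} (hx : 0 ≤ x) :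
    (1 + x) ^ N * exp (-x) ≤ N ! * exp 1 := by
  have h := pow_div_factorial_le_exp (x := 1 + x) (by linarith) N
  rw [div_le_iff₀ (by positivity), exp_add] at h
  calc (1 + x) ^ N * exp (-x) ≤ exp 1 * exp x * N ! * exp (-x) := by gcongr
    _ = N ! * exp 1 := by rw [exp_neg]; field_simp

lemma exp_neg_div_div_pow_le (N : ℕ) {A t : ℝ} (hA : 0 ≤ A) (ht : 0 < t) :
    exp (-A / t) / t ^ N ≤ N ! * exp 1 / (A + t) ^ N := by
  have h := one_add_pow_mul_exp_neg_le N (div_nonneg hA ht.le)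
  have hAt : 1 + A / t = (A + t) / t := by field_simp; ring
  rw [hAt, div_pow] at h
  rw [le_div_iff₀ (by positivity), neg_div]
  calc exp (-(A / t)) / t ^ N * (A + t) ^ N = (A + t) ^ N / t ^ N * exp (-(A / t)) := by ring
    _ ≤ N ! * exp 1 := h

lemma pow_mul_add_le_add_one_pow (N : ℕ) {x : ℝ} (hx : 0 ≤ x) :
    x ^ N * (x + 1 + N) ≤ (x + 1) ^ (N + 1) := by
  induction N with
  | zero => simp
  | succ N ih =>
    have hxN : 0 ≤ x ^ N * (N + 1) := by positivity
    calc x ^ (N + 1) * (x + 1 + ↑(N + 1)) ≤ (x + 1) * (x ^ N * (x + 1 + N)) := by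
          push_cast; rw [pow_succ]; nlinarith
      _ ≤ (x + 1) * (x + 1) ^ (N + 1) := by gcongr
      _ = (x + 1) ^ (N + 1 + 1) := by ring

lemma div_add_one_pow_succ_le_sub (N : ℕ) {x : ℝ} (hx : 0 < x) :
    (N : ℝ) / (x + 1) ^ (N + 1) ≤ 1 / x ^ N - 1 / (x + 1) ^ N := by
  have h := pow_mul_add_le_add_one_pow N hx.le
  rw [div_sub_div _ _ (by positivity) (by positivity),
    div_le_div_iff₀ (by positivity) (by positivity)]
  have hx1 : 0 ≤ (x + 1) ^ N := by positivity
  calc (N : ℝ) * (x ^ N * (x + 1) ^ N) = x ^ N * (x + 1) ^ N * N := by ring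
    _ ≤ (x + 1) ^ N * ((x + 1) ^ (N + 1) - x ^ N * (x + 1)) := by nlinarith
    _ = (1 * (x + 1) ^ N - x ^ N * 1) * (x + 1) ^ (N + 1) := by ring

lemma summable_and_tsum_le_of_le_sub_succ {f g : ℕ → ℝ} (hf : ∀ m, 0 ≤ f m)
    (hg : ∀ m, 0 ≤ g m) (h : ∀ m, f m ≤ g m - g (m + 1)) :
    Summable f ∧ ∑' m, f m ≤ g 0 := by
  have hpartial (K : ℕ) : ∑ m ∈ range K, f m ≤ g 0 :=
    calc ∑ m ∈ range K, f m ≤ ∑ m ∈ range K, (g m - g (m + 1)) := sum_le_sum fun m _ => h m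
      _ = g 0 - g K := sum_range_sub' g K
      _ ≤ g 0 := by linarith [hg K]
  exact ⟨summable_of_sum_range_le hf hpartial, Real.tsum_le_of_sum_range_le hf hpartial⟩

lemma summable_and_tsum_one_div_add_pow_succ_le {N : ℕ} (hN : 0 < N) {x : ℝ} (hx : 0 < x) :
    Summable (fun m : ℕ => 1 / (x + m + 1) ^ (N + 1)) ∧
      ∑' m : ℕ, 1 / (x + m + 1) ^ (N + 1) ≤ 1 / (N * x ^ N) := by
  have hN' : (0 : ℝ) < N := by exact_mod_cast hN
  have key := summable_and_tsum_le_of_le_sub_succ (f := fun m : ℕ => 1 / (x + m + 1) ^ (N + 1))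
    (g := fun m : ℕ => 1 / (N * (x + m) ^ N)) (fun m => by positivity) (fun m => by positivity)
    fun m => by
      have h := div_add_one_pow_succ_le_sub N (x := x + m) (by positivity)
      have hsplit : 1 / (N * (x + m) ^ N) - 1 / (N * (x + m + 1) ^ N)
          = (1 / (x + m) ^ N - 1 / (x + m + 1) ^ N) / N := by field_simp
      push_cast
      rw [← add_assoc, hsplit, le_div_iff₀ hN']
      simpa [div_eq_inv_mul, mul_comm] using h
  simpa using key

lemma sup'_exp_neg_div_div_pow_le (N m : ℕ) {S : Finset ℕ} (hS : S.Nonempty) {A : ℝ}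
    (hA : 0 ≤ A) :
    S.sup' hS (fun s : ℕ => exp (-A / ((m + 1 + s : ℕ) : ℝ)) / ((m + 1 + s : ℕ) : ℝ) ^ N) ≤
      N ! * exp 1 * (1 / (A + m + 1) ^ N) := by
  refine sup'_le hS _ fun s _ => (exp_neg_div_div_pow_le N hA (by positivity)).trans ?_
  have hm : A + m + 1 ≤ A + ((m + 1 + s : ℕ) : ℝ) := by
    push_cast; linarith [s.cast_nonneg (α := ℝ)]
  rw [mul_one_div]
  gcongr

theorem stmt13 (n : ℕ) (hn : 1 ≤ n) (c : ℝ) (hc : 0 < c) :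
    ∃ C : ℝ, 0 < C ∧ ∀ j r : ℕ, 2 ≤ j → 1 ≤ r →
      Summable (fun m : ℕ =>
        (Finset.Icc 0 (n * r ^ 2)).sup' (Finset.nonempty_Icc.mpr (Nat.zero_le _))
          (fun s : ℕ => Real.exp (-(c * 4 ^ j * r ^ 2) / ((m + 1 + s : ℕ) : ℝ)) /
            ((m + 1 + s : ℕ) : ℝ) ^ (1 + n))) ∧
      (∑' m : ℕ,
        (Finset.Icc 0 (n * r ^ 2)).sup' (Finset.nonempty_Icc.mpr (Nat.zero_le _))
          (fun s : ℕ => Real.exp (-(c * 4 ^ j * r ^ 2) / ((m + 1 + s : ℕ) : ℝ)) /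
            ((m + 1 + s : ℕ) : ℝ) ^ (1 + n))) ≤
        C / ((4 : ℝ) ^ (j * n) * (r : ℝ) ^ (2 * n)) := by
  have hn' : (0 : ℝ) < n := by exact_mod_cast hn
  refine ⟨(n + 1)! * exp 1 / (n * c ^ n), by positivity, fun j r _ hr => ?_⟩
  have hr' : (0 : ℝ) < r := by exact_mod_cast hr
  set A : ℝ := c * 4 ^ j * r ^ 2 with hA_def
  have hA : 0 < A := by positivity
  set S := Finset.Icc 0 (n * r ^ 2)
  have hS : S.Nonempty := Finset.nonempty_Icc.mpr (Nat.zero_le _)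
  rw [add_comm 1 n]
  have hnonneg (m : ℕ) : 0 ≤ S.sup' hS (fun s : ℕ =>
      exp (-A / ((m + 1 + s : ℕ) : ℝ)) / ((m + 1 + s : ℕ) : ℝ) ^ (n + 1)) :=
    le_sup'_of_le _ (Finset.mem_Icc.mpr ⟨le_rfl, Nat.zero_le _⟩) (by positivity)
  have hle (m : ℕ) := sup'_exp_neg_div_div_pow_le (n + 1) m hS hA.le
  obtain ⟨hsum, htsum⟩ := summable_and_tsum_one_div_add_pow_succ_le hn hA
  have hsummable := (hsum.mul_left _).of_nonneg_of_le hnonneg hle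
  refine ⟨hsummable, ?_⟩
  calc _ ≤ ∑' m : ℕ, (n + 1)! * exp 1 * (1 / (A + m + 1) ^ (n + 1)) :=
        hsummable.tsum_le_tsum hle (hsum.mul_left _)
    _ = (n + 1)! * exp 1 * ∑' m : ℕ, 1 / (A + m + 1) ^ (n + 1) := tsum_mul_left
    _ ≤ (n + 1)! * exp 1 * (1 / (n * A ^ n)) := by gcongr
    _ = _ := by rw [hA_def]; field_simp; ring
end

section
/- Let n ≥ 1 be an integer and c > 0. There exists C > 0 such that for all integers j ≥ 2 and r ≥ 1, ∑_{m=1}^{∞} m^{-1/2} · sup_{0≤s≤nr²} exp(-c·4^j r²/(m+s))·(m+s)^{-(n+1/2)} ≤ C·4^{-jn}·r^{-2n}. -/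
/-!
Write `T = c 4^j r²` and `p = n + 1/2`. Every term inside the supremum is `e^{-T/x} x^{-p}` with
`x ≥ m + 1`, which is at most `(sup_y e^{-y} y^p) T^{-p}` and at most `(m + 1)^{-p}`. Splitting the
series at `m ≈ T`, the first bound gives `T^{-p} ∑_{m < T} (m + 1)^{-1/2} ≲ T^{-p} √T = T^{-n}`, and
the second gives `∑_{m ≥ T} (m + 1)^{-(n+1)} ≲ T^{-n} / n`. As `T ≥ c`, the constants depend only on
`n` and `c`.
-/

open Real Finset
open scoped Nat

lemma rpow_le_one_add_pow {y a : ℝ} {k : ℕ} (hy : 0 ≤ y) (ha : 0 ≤ a) (hak : a ≤ k) :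
    y ^ a ≤ 1 + y ^ k := by
  rcases le_total y 1 with hy1 | hy1
  · linarith [rpow_le_one hy hy1 ha, pow_nonneg hy k]
  · calc y ^ a ≤ y ^ (k : ℝ) := rpow_le_rpow_of_exponent_le hy1 hak
      _ ≤ 1 + y ^ k := by rw [rpow_natCast]; linarith

lemma exp_neg_mul_pow_le_factorial {y : ℝ} (hy : 0 ≤ y) (k : ℕ) : exp (-y) * y ^ k ≤ k ! := by
  have := pow_div_factorial_le_exp y hy k
  rw [div_le_iff₀ (by positivity)] at this
  rw [exp_neg, inv_mul_le_iff₀ (exp_pos y)]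
  linarith

lemma exp_neg_mul_rpow_le (n : ℕ) {y : ℝ} (hy : 0 ≤ y) :
    exp (-y) * y ^ ((n : ℝ) + 1 / 2) ≤ 1 + (n + 1)! := by
  have hpow : y ^ ((n : ℝ) + 1 / 2) ≤ 1 + y ^ (n + 1) :=
    rpow_le_one_add_pow hy (by positivity) (by push_cast; linarith)
  calc exp (-y) * y ^ ((n : ℝ) + 1 / 2) ≤ exp (-y) * (1 + y ^ (n + 1)) := by gcongr
    _ = exp (-y) + exp (-y) * y ^ (n + 1) := by ring
    _ ≤ 1 + (n + 1)! := by
      gcongr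
      · exact exp_le_one_iff.mpr (by linarith)
      · exact exp_neg_mul_pow_le_factorial hy _

noncomputable def expDecay (n : ℕ) (T x : ℝ) : ℝ := exp (-T / x) / x ^ ((n : ℝ) + 1 / 2)

section expDecay

variable (n : ℕ) {T x : ℝ}

lemma expDecay_nonneg (hx : 0 ≤ x) : 0 ≤ expDecay n T x := by
  unfold expDecay; positivity

lemma expDecay_le_of_pos (hT : 0 < T) (hx : 0 < x) :
    expDecay n T x ≤ (1 + (n + 1)!) / T ^ ((n : ℝ) + 1 / 2) := by
  have hscale : expDecay n T x =
      exp (-(T / x)) * (T / x) ^ ((n : ℝ) + 1 / 2) / T ^ ((n : ℝ) + 1 / 2) := by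
    rw [expDecay, div_rpow hT.le hx.le, neg_div]
    field_simp
  rw [hscale]
  gcongr
  exact exp_neg_mul_rpow_le n (by positivity)

lemma expDecay_le_of_le {y : ℝ} (hT : 0 ≤ T) (hy : 0 < y) (hyx : y ≤ x) :
    expDecay n T x ≤ 1 / y ^ ((n : ℝ) + 1 / 2) := by
  have hx : 0 < x := hy.trans_le hyx
  have hexp : exp (-T / x) ≤ 1 := exp_le_one_iff.mpr (by rw [neg_div, neg_nonpos]; positivity)
  unfold expDecay
  gcongr

end expDecay

lemma sum_range_rpow_neg_half_le (M : ℕ) :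
    ∑ m ∈ range M, ((m : ℝ) + 1) ^ (-(1 / 2) : ℝ) ≤ 2 * √M := by
  induction M with
  | zero => simp
  | succ M ih =>
    have hsqrt : ((M : ℝ) + 1) ^ (-(1 / 2) : ℝ) = 1 / √((M : ℝ) + 1) := by
      rw [rpow_neg (by positivity), sqrt_eq_rpow]
      exact (one_div _).symm
    have hpos : 0 < √((M : ℝ) + 1) := sqrt_pos.mpr (by positivity)
    -- AM-GM: `2 √M √(M+1) ≤ 2M + 1`
    have hstep : 1 / √((M : ℝ) + 1) ≤ 2 * (√((M : ℝ) + 1) - √M) := by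
      rw [div_le_iff₀ hpos]
      nlinarith [sq_nonneg (√M - √((M : ℝ) + 1)), sq_sqrt (Nat.cast_nonneg (α := ℝ) M),
        sq_sqrt (by positivity : (0 : ℝ) ≤ M + 1)]
    rw [sum_range_succ, hsqrt, Nat.cast_succ]
    linarith

lemma pow_mul_add_le_mul_add_one_pow {x : ℝ} (hx : 0 ≤ x) (n : ℕ) :
    x ^ n * (x + n) ≤ x * (x + 1) ^ n := by
  induction n with
  | zero => simp
  | succ n ih =>
    calc x ^ (n + 1) * (x + (n + 1 : ℕ)) ≤ (x + 1) * (x ^ n * (x + n)) := by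
          push_cast; ring_nf; nlinarith [mul_nonneg (pow_nonneg hx n) (Nat.cast_nonneg (α := ℝ) n)]
      _ ≤ (x + 1) * (x * (x + 1) ^ n) := by gcongr
      _ = x * (x + 1) ^ (n + 1) := by ring

lemma inv_pow_succ_le_sub {n : ℕ} (hn : 1 ≤ n) {x : ℝ} (hx : 0 < x) :
    1 / (x + 1) ^ (n + 1) ≤ (1 / x ^ n - 1 / (x + 1) ^ n) / n := by
  have hbernoulli := pow_mul_add_le_mul_add_one_pow hx.le n
  have hmono : x ^ n ≤ (x + 1) ^ n := pow_le_pow_left₀ hx.le (by linarith) n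
  have hgap : n * x ^ n ≤ ((x + 1) ^ n - x ^ n) * (x + 1) := by nlinarith
  have hn0 : (0 : ℝ) < n := by exact_mod_cast hn
  rw [div_sub_div _ _ (by positivity) (by positivity), div_div,
    div_le_div_iff₀ (by positivity) (by positivity), pow_succ]
  nlinarith [mul_le_mul_of_nonneg_right hgap (by positivity : (0 : ℝ) ≤ (x + 1) ^ n)]

lemma sum_range_inv_pow_succ_le {n : ℕ} (hn : 1 ≤ n) {x : ℝ} (hx : 0 < x) (N : ℕ) :
    ∑ k ∈ range N, 1 / (x + k + 1) ^ (n + 1) ≤ 1 / (n * x ^ n) := by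
  set f : ℕ → ℝ := fun k => 1 / (x + k) ^ n
  calc ∑ k ∈ range N, 1 / (x + k + 1) ^ (n + 1)
      ≤ ∑ k ∈ range N, (f k - f (k + 1)) / n := by
        refine sum_le_sum fun k _ => ?_
        simpa [f, add_assoc] using inv_pow_succ_le_sub hn (by positivity : 0 < x + k)
    _ = (f 0 - f N) / n := by rw [← sum_div, sum_range_sub']
    _ ≤ f 0 / n := by gcongr; linarith [show 0 ≤ f N by positivity]
    _ = 1 / (n * x ^ n) := by simp only [f, Nat.cast_zero, add_zero]; rw [div_div, mul_comm]

lemma summable_and_tsum_le_of_le_min {a : ℕ → ℝ} {n : ℕ} (hn : 1 ≤ n) {A T : ℝ} (hT : 0 < T)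
    (ha : ∀ m, 0 ≤ a m) (h_head : ∀ m, a m ≤ A * ((m : ℝ) + 1) ^ (-(1 / 2) : ℝ))
    (h_tail : ∀ m, a m ≤ 1 / ((m : ℝ) + 1) ^ (n + 1)) :
    Summable a ∧ ∑' m, a m ≤ 2 * A * √(T + 1) + 1 / (n * T ^ n) := by
  -- split the series at `M = ⌈T⌉`: the first bound controls the head, the second the tail
  set M := ⌈T⌉₊
  have hTM : T ≤ M := Nat.le_ceil T
  have hMT : (M : ℝ) ≤ T + 1 := (Nat.ceil_lt_add_one hT.le).le
  have hA : 0 ≤ A := by simpa using (ha 0).trans (h_head 0)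
  have htail : ∀ N, ∑ k ∈ range N, a (k + M) ≤ 1 / (n * T ^ n) := fun N =>
    calc ∑ k ∈ range N, a (k + M) ≤ ∑ k ∈ range N, 1 / ((M : ℝ) + k + 1) ^ (n + 1) :=
          sum_le_sum fun k _ => (h_tail _).trans_eq (by push_cast; ring_nf)
      _ ≤ 1 / (n * M ^ n) := sum_range_inv_pow_succ_le hn (hT.trans_le hTM) N
      _ ≤ 1 / (n * T ^ n) := by gcongr
  have hsum : Summable a :=
    (summable_nat_add_iff M).mp (summable_of_sum_range_le (fun k => ha _) htail)
  refine ⟨hsum, ?_⟩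
  have hhead : ∑ m ∈ range M, a m ≤ 2 * A * √(T + 1) :=
    calc ∑ m ∈ range M, a m ≤ ∑ m ∈ range M, A * ((m : ℝ) + 1) ^ (-(1 / 2) : ℝ) :=
          sum_le_sum fun m _ => h_head m
      _ ≤ A * (2 * √M) := by rw [← mul_sum]; gcongr; exact sum_range_rpow_neg_half_le M
      _ ≤ 2 * A * √(T + 1) := by rw [← mul_assoc, mul_comm A]; gcongr
  rw [← hsum.sum_add_tsum_nat_add M]
  exact add_le_add hhead (tsum_le_of_sum_range_le (fun k => ha _) htail)

noncomputable def supSummand (n N : ℕ) (T : ℝ) (m : ℕ) : ℝ :=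
  ((m + 1 : ℝ)) ^ (-(1 / 2) : ℝ) *
    (Icc 0 N).sup' (nonempty_Icc.mpr (Nat.zero_le _)) fun s => expDecay n T ((m + 1 + s : ℕ) : ℝ)

section supSummand

variable (n N : ℕ) {T : ℝ}

lemma supSummand_nonneg (m : ℕ) : 0 ≤ supSummand n N T m := by
  refine mul_nonneg (by positivity) (le_sup'_of_le _ (left_mem_Icc.mpr (Nat.zero_le N)) ?_)
  exact expDecay_nonneg n (Nat.cast_nonneg _)

lemma supSummand_le_rpow_neg_half (hT : 0 < T) (m : ℕ) :
    supSummand n N T m ≤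
      (1 + (n + 1)!) / T ^ ((n : ℝ) + 1 / 2) * ((m : ℝ) + 1) ^ (-(1 / 2) : ℝ) := by
  rw [supSummand, mul_comm]
  gcongr
  exact sup'_le _ _ fun s _ => expDecay_le_of_pos n hT (by positivity)

lemma supSummand_le_inv_pow (hT : 0 ≤ T) (m : ℕ) :
    supSummand n N T m ≤ 1 / ((m : ℝ) + 1) ^ (n + 1) := by
  have hm : (0 : ℝ) < m + 1 := by positivity
  have hsup : (Icc 0 N).sup' (nonempty_Icc.mpr (Nat.zero_le _))
      (fun s => expDecay n T ((m + 1 + s : ℕ) : ℝ)) ≤ 1 / ((m : ℝ) + 1) ^ ((n : ℝ) + 1 / 2) :=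
    sup'_le _ _ fun s _ =>
      expDecay_le_of_le n hT hm (by push_cast; linarith [Nat.cast_nonneg (α := ℝ) s])
  calc supSummand n N T m
      ≤ ((m : ℝ) + 1) ^ (-(1 / 2) : ℝ) * (1 / ((m : ℝ) + 1) ^ ((n : ℝ) + 1 / 2)) := by
        rw [supSummand]; gcongr
    _ = 1 / ((m : ℝ) + 1) ^ (n + 1) := by
        have hsplit : ((m : ℝ) + 1) ^ ((n : ℝ) + 1 / 2) =
            ((m : ℝ) + 1) ^ (n + 1) * ((m : ℝ) + 1) ^ (-(1 / 2) : ℝ) := by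
          rw [← rpow_natCast, ← rpow_add hm]; push_cast; ring_nf
        rw [hsplit]
        field_simp

end supSummand

lemma sqrt_add_one_div_rpow_le (n : ℕ) {c T : ℝ} (hc : 0 < c) (hcT : c ≤ T) :
    √(T + 1) / T ^ ((n : ℝ) + 1 / 2) ≤ √(1 + 1 / c) / T ^ n := by
  have hT : 0 < T := hc.trans_le hcT
  have hsplit : T ^ ((n : ℝ) + 1 / 2) = T ^ n * √T := by
    rw [rpow_add hT, rpow_natCast, sqrt_eq_rpow]
  rw [hsplit, ← div_div, div_right_comm, ← sqrt_div' _ hT.le, add_div, div_self hT.ne']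
  gcongr

theorem stmt14 (n : ℕ) (hn : 1 ≤ n) (c : ℝ) (hc : 0 < c) :
    ∃ C : ℝ, 0 < C ∧ ∀ j r : ℕ, 2 ≤ j → 1 ≤ r →
      Summable (fun m : ℕ =>
        ((m + 1 : ℝ)) ^ (-(1/2) : ℝ) *
        (Finset.Icc 0 (n * r ^ 2)).sup' (Finset.nonempty_Icc.mpr (Nat.zero_le _))
          (fun s : ℕ => Real.exp (-(c * 4 ^ j * r ^ 2) / ((m + 1 + s : ℕ) : ℝ)) /
            ((m + 1 + s : ℕ) : ℝ) ^ ((n : ℝ) + 1/2))) ∧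
      (∑' m : ℕ,
        ((m + 1 : ℝ)) ^ (-(1/2) : ℝ) *
        (Finset.Icc 0 (n * r ^ 2)).sup' (Finset.nonempty_Icc.mpr (Nat.zero_le _))
          (fun s : ℕ => Real.exp (-(c * 4 ^ j * r ^ 2) / ((m + 1 + s : ℕ) : ℝ)) /
            ((m + 1 + s : ℕ) : ℝ) ^ ((n : ℝ) + 1/2))) ≤
        C / ((4 : ℝ) ^ (j * n) * (r : ℝ) ^ (2 * n)) := by
  set E : ℝ := 1 + (n + 1)!
  refine ⟨(2 * E * √(1 + 1 / c) + 1 / n) / c ^ n, by positivity, fun j r _ hr => ?_⟩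
  set T : ℝ := c * 4 ^ j * r ^ 2 with hT_def
  have hcT : c ≤ T := by
    have : (1 : ℝ) ≤ 4 ^ j * r ^ 2 :=
      one_le_mul_of_one_le_of_one_le (one_le_pow₀ (by norm_num))
        (one_le_pow₀ (by exact_mod_cast hr))
    rw [hT_def, mul_assoc]
    exact le_mul_of_one_le_right hc.le this
  have hT : 0 < T := hc.trans_le hcT
  obtain ⟨hsum, hle⟩ := summable_and_tsum_le_of_le_min hn hT (supSummand_nonneg n (n * r ^ 2))
    (supSummand_le_rpow_neg_half n _ hT) (supSummand_le_inv_pow n _ hT.le)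
  refine ⟨hsum, hle.trans ?_⟩
  have hTpow : T ^ n = c ^ n * ((4 : ℝ) ^ (j * n) * (r : ℝ) ^ (2 * n)) := by
    rw [hT_def]; ring
  calc 2 * (E / T ^ ((n : ℝ) + 1 / 2)) * √(T + 1) + 1 / (n * T ^ n)
      = 2 * E * (√(T + 1) / T ^ ((n : ℝ) + 1 / 2)) + 1 / (n * T ^ n) := by ring
    _ ≤ 2 * E * (√(1 + 1 / c) / T ^ n) + 1 / (n * T ^ n) := by
      have := sqrt_add_one_div_rpow_le n hc hcT
      gcongr
    _ = _ := by rw [hTpow]; field_simp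
end

section
/- Let P be a self-adjoint operator on a Hilbert space H with spectrum contained in (a, 1] for some a > -1, and let β > 0. Then there is C > 0 such that for all f ∈ H, ∑_{l≥1} l^{2β-1}·‖(I-P)^β P^{l-1} f‖² ≤ C·‖f‖². -/
/-!
By the functional calculus, `∑ l, w l * ‖φ l (P) f‖ ^ 2 = re ⟪(∑ l, w l * φ l ^ 2)(P) f, f⟫`,
so it suffices to bound `∑ l, (l + 1) ^ (2β - 1) * (1 - x) ^ (2β) * x ^ (2l)` uniformly for
`x ∈ (a, 1]`. There `1 - x ≤ (1 - x²) / (1 + a)`, and with `t = x²`, `p = 2β` this is the uniform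
bound `(1 - t) ^ p * ∑ l, (l + 1) ^ (p - 1) * t ^ l ≤ C` on `[0, 1]`, which expresses that the
weights `(l + 1) ^ (p - 1)` grow like the coefficients of `(1 - t) ^ (-p)`.
-/

open Finset Real

section GeometricWeights

variable {p t : ℝ}

lemma rpow_le_rpow_mul_exp {s y : ℝ} (hs : 0 < s) (hy : 0 ≤ y) : y ^ s ≤ s ^ s * exp y := by
  have hys : y / s ≤ exp (y / s) := by linarith [add_one_le_exp (y / s)]
  calc y ^ s = s ^ s * (y / s) ^ s := by
        rw [← mul_rpow hs.le (by positivity), mul_div_cancel₀ _ hs.ne']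
    _ ≤ s ^ s * exp (y / s) ^ s := by gcongr
    _ = s ^ s * exp y := by rw [← exp_mul, div_mul_cancel₀ _ hs.ne']

lemma mul_rpow_sub_one_le_rpow_sub_rpow {x : ℝ} (hx : 0 ≤ x) (hp : 0 ≤ p) (hp1 : p ≤ 1) :
    p * (x + 1) ^ (p - 1) ≤ (x + 1) ^ p - x ^ p := by
  have hx1 : 0 < x + 1 := by linarith
  have hσ : -1 ≤ -(x + 1)⁻¹ := by
    rw [neg_le_neg_iff]; exact inv_le_one_of_one_le₀ (by linarith)
  have hx_eq : x = (x + 1) * (1 + -(x + 1)⁻¹) := by field_simp; ring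
  suffices x ^ p ≤ (x + 1) ^ p - p * (x + 1) ^ (p - 1) by linarith
  calc x ^ p = (x + 1) ^ p * (1 + -(x + 1)⁻¹) ^ p := by
        rw [← mul_rpow hx1.le (by linarith), ← hx_eq]
    _ ≤ (x + 1) ^ p * (1 + p * -(x + 1)⁻¹) := by
        gcongr; exact rpow_one_add_le_one_add_mul_self hσ hp hp1
    _ = (x + 1) ^ p - p * (x + 1) ^ (p - 1) := by
        rw [rpow_sub_one hx1.ne']; ring

lemma sum_range_rpow_sub_one_le (hp : 0 < p) (hp1 : p ≤ 1) (M : ℕ) :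
    ∑ l ∈ range M, ((l : ℝ) + 1) ^ (p - 1) ≤ (M : ℝ) ^ p / p := by
  rw [le_div_iff₀ hp, sum_mul]
  calc ∑ l ∈ range M, ((l : ℝ) + 1) ^ (p - 1) * p
      ≤ ∑ l ∈ range M, ((((l + 1 : ℕ) : ℝ)) ^ p - (l : ℝ) ^ p) := by
        gcongr with l
        push_cast
        linarith [mul_rpow_sub_one_le_rpow_sub_rpow l.cast_nonneg hp.le hp1]
    _ = (M : ℝ) ^ p := by
        rw [sum_range_sub (fun l : ℕ => (l : ℝ) ^ p)]
        simp [zero_rpow hp.ne']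

/- The terms with `l + 1 ≤ (1 - t)⁻¹` are bounded by `(1 - t) ^ p * (l + 1) ^ (p - 1)`, the later
ones (where `((l + 1) * (1 - t)) ^ (p - 1) ≤ 1`) by the geometric terms `(1 - t) * t ^ l`. -/
lemma sum_range_rpow_mul_geom_le_of_le_one (hp : 0 < p) (hp1 : p ≤ 1) (ht0 : 0 ≤ t)
    (ht1 : t < 1) (N : ℕ) :
    ∑ l ∈ range N, ((l : ℝ) + 1) ^ (p - 1) * (1 - t) ^ p * t ^ l ≤ p⁻¹ + 1 := by
  have hv : 0 < 1 - t := by linarith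
  set g : ℕ → ℝ := fun l => ((l : ℝ) + 1) ^ (p - 1) * (1 - t) ^ p * t ^ l with hg
  set M := ⌊(1 - t)⁻¹⌋₊
  have head : ∑ l ∈ range M, g l ≤ p⁻¹ := by
    have hMv : (M : ℝ) * (1 - t) ≤ 1 := by
      calc (M : ℝ) * (1 - t) ≤ (1 - t)⁻¹ * (1 - t) := by
            gcongr; exact Nat.floor_le (by positivity)
        _ = 1 := inv_mul_cancel₀ hv.ne'
    calc ∑ l ∈ range M, g l ≤ ∑ l ∈ range M, ((l : ℝ) + 1) ^ (p - 1) * (1 - t) ^ p :=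
          sum_le_sum fun l _ => mul_le_of_le_one_right (by positivity) (pow_le_one₀ ht0 ht1.le)
      _ ≤ (M : ℝ) ^ p / p * (1 - t) ^ p := by
          rw [← sum_mul]; gcongr; exact sum_range_rpow_sub_one_le hp hp1 M
      _ = (M * (1 - t)) ^ p / p := by rw [mul_rpow (by positivity) hv.le]; ring
      _ ≤ 1 / p := by gcongr; exact rpow_le_one (by positivity) hMv hp.le
      _ = p⁻¹ := one_div p
  have tail (n : ℕ) : ∑ l ∈ Ico M n, g l ≤ 1 := by
    have hterm (l : ℕ) (hl : l ∈ Ico M n) : g l ≤ (1 - t) * t ^ l := by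
      have hlv : 1 ≤ ((l : ℝ) + 1) * (1 - t) := by
        rw [← div_le_iff₀ hv, one_div]
        exact (Nat.lt_floor_add_one _).le.trans
          (by exact_mod_cast Nat.add_le_add_right (mem_Ico.mp hl).1 1)
      have hweight : ((l : ℝ) + 1) ^ (p - 1) * (1 - t) ^ (p - 1) ≤ 1 := by
        rw [← mul_rpow (by positivity) hv.le]
        exact rpow_le_one_of_one_le_of_nonpos hlv (by linarith)
      calc g l = ((l : ℝ) + 1) ^ (p - 1) * (1 - t) ^ (p - 1) * ((1 - t) * t ^ l) := by
            rw [hg, rpow_sub_one hv.ne']; field_simp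
        _ ≤ (1 - t) * t ^ l := mul_le_of_le_one_left (by positivity) hweight
    calc ∑ l ∈ Ico M n, g l ≤ (1 - t) * ∑ l ∈ Ico M n, t ^ l := by
          rw [mul_sum]; exact sum_le_sum hterm
      _ ≤ (1 - t) * (t ^ M / (1 - t)) := by gcongr; exact geom_sum_Ico_le_of_lt_one ht0 ht1
      _ ≤ 1 := by rw [mul_div_cancel₀ _ hv.ne']; exact pow_le_one₀ ht0 ht1.le
  calc ∑ l ∈ range N, g l ≤ ∑ l ∈ range (max N M), g l :=
        sum_le_sum_of_subset_of_nonneg (range_subset_range.mpr (le_max_left N M))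
          fun l _ _ => by positivity
    _ ≤ p⁻¹ + 1 := by
        rw [← sum_range_add_sum_Ico _ (le_max_right N M)]
        exact add_le_add head (tail _)

/- With `v = 1 - t`, half of the decay `t ^ l ≤ exp (-v l)` absorbs the weight
`(v (l + 1)) ^ (p - 1)`; the other half is a geometric series of ratio `exp (-v / 2)`. -/
lemma sum_range_rpow_mul_geom_le_of_one_lt (hp : 1 < p) (ht0 : 0 ≤ t) (ht1 : t < 1) (N : ℕ) :
    ∑ l ∈ range N, ((l : ℝ) + 1) ^ (p - 1) * (1 - t) ^ p * t ^ l
      ≤ 2 * exp 1 * (2 * (p - 1)) ^ (p - 1) := by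
  set s := p - 1
  set v := 1 - t
  have hs : 0 < s := by simp only [s]; linarith
  have hv : 0 < v := by simp only [v]; linarith
  have hv1 : v ≤ 1 := by simp only [v]; linarith
  set r := exp (-(v / 2))
  have hr : r < 1 := exp_lt_one_iff.mpr (by linarith)
  have hterm (l : ℕ) :
      ((l : ℝ) + 1) ^ s * v ^ p * t ^ l ≤ (2 * s) ^ s * exp (v / 2) * (v * r ^ l) := by
    have hweight : (v * ((l : ℝ) + 1)) ^ s ≤ (2 * s) ^ s * exp (v * ((l : ℝ) + 1) / 2) := by
      calc (v * ((l : ℝ) + 1)) ^ s = 2 ^ s * (v * ((l : ℝ) + 1) / 2) ^ s := by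
            rw [← mul_rpow (by norm_num) (by positivity)]; ring_nf
        _ ≤ 2 ^ s * (s ^ s * exp (v * ((l : ℝ) + 1) / 2)) := by
            gcongr; exact rpow_le_rpow_mul_exp hs (by positivity)
        _ = (2 * s) ^ s * exp (v * ((l : ℝ) + 1) / 2) := by
            rw [mul_rpow (by norm_num) hs.le]; ring
    have hdecay : t ^ l ≤ exp (-v) ^ l := by
      gcongr; simpa [v] using one_sub_le_exp_neg v
    have hexp : exp (v * ((l : ℝ) + 1) / 2) * exp (-v) ^ l = exp (v / 2) * r ^ l := by
      simp only [r, ← exp_nat_mul, ← exp_add]; ring_nf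
    calc ((l : ℝ) + 1) ^ s * v ^ p * t ^ l = v * (v * ((l : ℝ) + 1)) ^ s * t ^ l := by
          rw [mul_rpow hv.le (by positivity), show p = s + 1 by ring, rpow_add_one hv.ne']; ring
      _ ≤ v * ((2 * s) ^ s * exp (v * ((l : ℝ) + 1) / 2)) * exp (-v) ^ l := by gcongr
      _ = (2 * s) ^ s * exp (v / 2) * (v * r ^ l) := by
          linear_combination v * (2 * s) ^ s * hexp
  have hgeom : v * ∑ l ∈ range N, r ^ l ≤ 2 * exp (v / 2) := by
    have hhalf : exp (v / 2) * r = 1 := by rw [← exp_add]; simp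
    calc v * ∑ l ∈ range N, r ^ l ≤ v * (1 - r)⁻¹ := by
          gcongr; simpa using geom_sum_Ico_le_of_lt_one (m := 0) (n := N) (exp_pos _).le hr
      _ ≤ 2 * exp (v / 2) := by
          rw [← div_eq_mul_inv, div_le_iff₀ (by linarith)]
          linarith [add_one_le_exp (v / 2)]
  have hexp : exp v = exp (v / 2) * exp (v / 2) := by rw [← exp_add]; ring_nf
  calc ∑ l ∈ range N, ((l : ℝ) + 1) ^ s * v ^ p * t ^ l
      ≤ ∑ l ∈ range N, (2 * s) ^ s * exp (v / 2) * (v * r ^ l) := sum_le_sum fun l _ => hterm l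
    _ = (2 * s) ^ s * exp (v / 2) * (v * ∑ l ∈ range N, r ^ l) := by rw [mul_sum, mul_sum]
    _ ≤ (2 * s) ^ s * exp (v / 2) * (2 * exp (v / 2)) := by gcongr
    _ = 2 * exp v * (2 * s) ^ s := by rw [hexp]; ring
    _ ≤ 2 * exp 1 * (2 * s) ^ s := by gcongr

lemma exists_sum_range_rpow_mul_geom_le (hp : 0 < p) :
    ∃ C, 0 < C ∧ ∀ t ∈ Set.Icc (0 : ℝ) 1, ∀ N : ℕ,
      ∑ l ∈ range N, ((l : ℝ) + 1) ^ (p - 1) * (1 - t) ^ p * t ^ l ≤ C := by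
  obtain ⟨C, hC, hbound⟩ : ∃ C, 0 < C ∧ ∀ t, 0 ≤ t → t < 1 → ∀ N : ℕ,
      ∑ l ∈ range N, ((l : ℝ) + 1) ^ (p - 1) * (1 - t) ^ p * t ^ l ≤ C := by
    rcases le_or_gt p 1 with hp1 | hp1
    · exact ⟨p⁻¹ + 1, by positivity, fun t ht0 ht1 =>
        sum_range_rpow_mul_geom_le_of_le_one hp hp1 ht0 ht1⟩
    · have : 0 < (2 * (p - 1)) ^ (p - 1) := rpow_pos_of_pos (by linarith) _
      exact ⟨_, by positivity, fun t ht0 ht1 => sum_range_rpow_mul_geom_le_of_one_lt hp1 ht0 ht1⟩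
  refine ⟨C, hC, fun t ⟨ht0, ht1⟩ N => ?_⟩
  rcases ht1.lt_or_eq with ht1 | rfl
  · exact hbound t ht0 ht1 N
  · simpa [zero_rpow hp.ne'] using hC.le

end GeometricWeights

lemma one_sub_rpow_le_one_sub_sq_rpow_div {a x p : ℝ} (ha : -1 < a) (hx : x ∈ Set.Ioc a 1)
    (hp : 0 ≤ p) : (1 - x) ^ p ≤ (1 - x ^ 2) ^ p / (1 + a) ^ p := by
  obtain ⟨hax, hx1⟩ := hx
  rw [le_div_iff₀ (rpow_pos_of_pos (by linarith) p), ← mul_rpow (by linarith) (by linarith),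
    show 1 - x ^ 2 = (1 - x) * (1 + x) by ring]
  exact rpow_le_rpow (mul_nonneg (by linarith) (by linarith))
    (mul_le_mul_of_nonneg_left (by linarith) (by linarith)) hp

lemma sum_range_rpow_mul_sq_le {a x β C : ℝ} (ha : -1 < a) (hx : x ∈ Set.Ioc a 1) (hβ : 0 ≤ β)
    (hgeom : ∀ t ∈ Set.Icc (0 : ℝ) 1, ∀ N : ℕ,
      ∑ l ∈ range N, ((l : ℝ) + 1) ^ (2 * β - 1) * (1 - t) ^ (2 * β) * t ^ l ≤ C) (N : ℕ) :
    ∑ l ∈ range N, ((l : ℝ) + 1) ^ (2 * β - 1) * ((1 - x) ^ β * x ^ l) ^ 2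
      ≤ C / (1 + a) ^ (2 * β) := by
  have hx1 : 0 ≤ 1 - x := by linarith [hx.2]
  have hx2 : x ^ 2 ∈ Set.Icc (0 : ℝ) 1 := ⟨sq_nonneg x, by nlinarith [hx.1, hx.2]⟩
  calc ∑ l ∈ range N, ((l : ℝ) + 1) ^ (2 * β - 1) * ((1 - x) ^ β * x ^ l) ^ 2
      = ∑ l ∈ range N, ((l : ℝ) + 1) ^ (2 * β - 1) * (1 - x) ^ (2 * β) * (x ^ 2) ^ l := by
        refine sum_congr rfl fun l _ => ?_
        rw [mul_pow, ← rpow_mul_natCast hx1, ← pow_mul, mul_comm β, mul_comm l]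
        push_cast; ring
    _ ≤ ∑ l ∈ range N, ((l : ℝ) + 1) ^ (2 * β - 1) *
          ((1 - x ^ 2) ^ (2 * β) / (1 + a) ^ (2 * β)) * (x ^ 2) ^ l := by
        gcongr
        exact one_sub_rpow_le_one_sub_sq_rpow_div ha hx (by positivity)
    _ = (∑ l ∈ range N, ((l : ℝ) + 1) ^ (2 * β - 1) * (1 - x ^ 2) ^ (2 * β) * (x ^ 2) ^ l)
          / (1 + a) ^ (2 * β) := by
        rw [sum_div]; exact sum_congr rfl fun l _ => by ring
    _ ≤ C / (1 + a) ^ (2 * β) :=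
        div_le_div_of_nonneg_right (hgeom _ hx2 N) (rpow_nonneg (by linarith) _)

section FunctionalCalculus

variable {H : Type*} [NormedAddCommGroup H] [InnerProductSpace ℂ H] [CompleteSpace H]
  {P : H →L[ℂ] H}

lemma norm_cfc_apply_sq (hP : IsSelfAdjoint P) (φ : ℝ → ℝ) (hφ : ContinuousOn φ (spectrum ℝ P))
    (f : H) : ‖cfc φ P f‖ ^ 2 = RCLike.re (inner ℂ (cfc (fun x => φ x ^ 2) P f) f) := by
  rw [ContinuousLinearMap.apply_norm_sq_eq_inner_adjoint_left,
    ← ContinuousLinearMap.star_eq_adjoint, (cfc_predicate φ P).star_eq, cfc_pow φ 2 P, sq]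
  rfl

lemma sum_mul_norm_cfc_apply_sq_le (hP : IsSelfAdjoint P) {ι : Type*} (s : Finset ι)
    (w : ι → ℝ) (hw : ∀ i, 0 ≤ w i) (φ : ι → ℝ → ℝ) (hφ : ∀ i, ContinuousOn (φ i) (spectrum ℝ P))
    {C : ℝ} (hC : 0 ≤ C) (hbound : ∀ x ∈ spectrum ℝ P, ∑ i ∈ s, w i * φ i x ^ 2 ≤ C) (f : H) :
    ∑ i ∈ s, w i * ‖cfc (φ i) P f‖ ^ 2 ≤ C * ‖f‖ ^ 2 := by
  set T := cfc (fun x => ∑ i ∈ s, w i * φ i x ^ 2) P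
  have hT_eq : T = ∑ i ∈ s, w i • cfc (fun x => φ i x ^ 2) P := by
    calc T = cfc (∑ i ∈ s, fun x => w i * φ i x ^ 2) P := by rw [sum_fn]
      _ = ∑ i ∈ s, w i • cfc (fun x => φ i x ^ 2) P := by
          rw [cfc_sum (fun i x => w i * φ i x ^ 2) P s
            fun i _ => continuousOn_const.mul ((hφ i).pow 2)]
          exact sum_congr rfl fun i _ => cfc_const_mul _ _ _ ((hφ i).pow 2)
  have hT : ∑ i ∈ s, w i * ‖cfc (φ i) P f‖ ^ 2 = RCLike.re (inner ℂ (T f) f) := by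
    simp [hT_eq, norm_cfc_apply_sq hP _ (hφ _)]
  have hT_norm : ‖T‖ ≤ C := norm_cfc_le hC fun x hx => by
    rw [Real.norm_of_nonneg (sum_nonneg fun i _ => mul_nonneg (hw i) (sq_nonneg _))]
    exact hbound x hx
  calc ∑ i ∈ s, w i * ‖cfc (φ i) P f‖ ^ 2 = RCLike.re (inner ℂ (T f) f) := hT
    _ ≤ ‖T f‖ * ‖f‖ := (RCLike.re_le_norm _).trans (norm_inner_le_norm _ _)
    _ ≤ C * ‖f‖ ^ 2 := by
        rw [sq, ← mul_assoc]; gcongr; exact T.le_of_opNorm_le hT_norm f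

lemma cfc_apply_pow_apply (hP : IsSelfAdjoint P) (g : ℝ → ℝ) (hg : ContinuousOn g (spectrum ℝ P))
    (l : ℕ) (f : H) : cfc g P ((P ^ l) f) = cfc (fun x => g x * x ^ l) P f := by
  rw [cfc_mul g (· ^ l) P, cfc_pow_id P l hP, mul_apply_eq_comp]

end FunctionalCalculus

theorem stmt17 {H : Type*} [NormedAddCommGroup H] [InnerProductSpace ℂ H] [CompleteSpace H]
    (P : H →L[ℂ] H) (hP : IsSelfAdjoint P) (a : ℝ) (ha : -1 < a)
    (hspec : spectrum ℂ P ⊆ (fun x : ℝ => (x : ℂ)) '' Set.Ioc a 1)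
    (β : ℝ) (hβ : 0 < β) :
    ∃ C : ℝ, 0 < C ∧ ∀ f : H,
      Summable (fun l : ℕ =>
        ((l + 1 : ℝ)) ^ (2 * β - 1) * ‖(cfc (fun x : ℝ => (1 - x) ^ β) P) ((P ^ l) f)‖ ^ 2) ∧
      (∑' l : ℕ,
        ((l + 1 : ℝ)) ^ (2 * β - 1) * ‖(cfc (fun x : ℝ => (1 - x) ^ β) P) ((P ^ l) f)‖ ^ 2) ≤
        C * ‖f‖ ^ 2 := by
  obtain ⟨C, hC, hgeom⟩ := exists_sum_range_rpow_mul_geom_le (p := 2 * β) (by positivity)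
  have hspecR : spectrum ℝ P ⊆ Set.Ioc a 1 := by
    rw [← spectrum.preimage_algebraMap ℂ]
    exact fun x hx => Complex.ofReal_injective.mem_set_image.mp (hspec hx)
  have hcont : Continuous fun x : ℝ => (1 - x) ^ β := by fun_prop (disch := positivity)
  have hC' : 0 < C / (1 + a) ^ (2 * β) := div_pos hC (rpow_pos_of_pos (by linarith) _)
  refine ⟨_, hC', fun f => ?_⟩
  have hpartial (N : ℕ) : ∑ l ∈ range N, ((l + 1 : ℝ)) ^ (2 * β - 1) *
      ‖(cfc (fun x : ℝ => (1 - x) ^ β) P) ((P ^ l) f)‖ ^ 2 ≤ C / (1 + a) ^ (2 * β) * ‖f‖ ^ 2 := by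
    simp_rw [cfc_apply_pow_apply hP _ hcont.continuousOn]
    exact sum_mul_norm_cfc_apply_sq_le hP _ _ (fun l => by positivity) _
      (fun l => by fun_prop (disch := positivity)) hC'.le
      (fun x hx => sum_range_rpow_mul_sq_le ha (hspecR hx) hβ.le hgeom N) f
  exact ⟨summable_of_sum_range_le (fun l => by positivity) hpartial,
    tsum_le_of_sum_range_le (fun l => by positivity) hpartial⟩
end

section
/- Let Γ be a countable set with weight m and Markov operator P with kernel p as above, with P self-adjoint on ℓ²(Γ,m) (i.e. p symmetric) and ‖P‖_{ℓ¹→ℓ¹} ≤ 1. Let q ∈ (1,2] and let f ≥ 0 be in ℓ¹ ∩ ℓ^∞. Then ∑_{x∈Γ} m(x)·∑_{n≥0}(-(∂_n + Δ))[(P^n f(x))^q] ≤ ‖f‖_q^q, where Δ = I - P and ∂_n u_n = u_{n+1} - u_n, assuming each term -(∂_n+Δ)[(P^n f)^q](x) is nonnegative. (In particular, with J(x) = -∑_{n≥0}(∂_n+Δ)[(P^n f(x))^q], one has ∑_x J(x)m(x) ≤ ‖f‖_q^q.) -/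
/-!
Write `uₙ = (Pⁿf)^q`, so that the summand is `P uₙ - uₙ₊₁`. Since `p` is symmetric and
`∑_y p(x,y) m(y) = 1`, `P` preserves the `m`-mass of nonnegative `ℓ¹` functions, hence the
`n`-th summand has total mass `‖Pⁿf‖_q^q - ‖Pⁿ⁺¹f‖_q^q`. The summands being nonnegative, the
order of summation can be exchanged, and the telescoping sum is at most `‖f‖_q^q`.
The iterates stay in `[0, sup f]` and in `ℓ¹`, which puts every `uₙ` in `ℓ¹` as `q ≥ 1`.
-/

noncomputable def PopOp {Γ : Type*} (p : Γ → Γ → ℝ) (m : Γ → ℝ) (g : Γ → ℝ) (x : Γ) : ℝ :=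
  ∑' y, p x y * g y * m y

open Finset

section MarkovKernel

variable {Γ : Type*} {m : Γ → ℝ} {p : Γ → Γ → ℝ}

theorem kernel_mul_le_of_le (hm : ∀ x, 0 ≤ m x) (hp0 : ∀ x y, 0 ≤ p x y) {g : Γ → ℝ} {C : ℝ}
    (hgC : ∀ y, g y ≤ C) (x y : Γ) : p x y * g y * m y ≤ C * (p x y * m y) :=
  (mul_le_mul_of_nonneg_right (mul_le_mul_of_nonneg_left (hgC y) (hp0 x y)) (hm y)).trans_eq
    (by ring)

theorem popOp_nonneg (hm : ∀ x, 0 ≤ m x) (hp0 : ∀ x y, 0 ≤ p x y) {g : Γ → ℝ}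
    (hg0 : ∀ y, 0 ≤ g y) (x : Γ) : 0 ≤ PopOp p m g x :=
  tsum_nonneg fun y => mul_nonneg (mul_nonneg (hp0 x y) (hg0 y)) (hm y)

theorem popOp_le (hm : ∀ x, 0 ≤ m x) (hp0 : ∀ x y, 0 ≤ p x y)
    (hmass : ∀ x, HasSum (fun y => p x y * m y) 1) {g : Γ → ℝ} {C : ℝ}
    (hg0 : ∀ y, 0 ≤ g y) (hgC : ∀ y, g y ≤ C) (x : Γ) : PopOp p m g x ≤ C := by
  have hsum : Summable fun y => p x y * g y * m y :=
    Summable.of_nonneg_of_le (fun y => mul_nonneg (mul_nonneg (hp0 x y) (hg0 y)) (hm y))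
      (kernel_mul_le_of_le hm hp0 hgC x) ((hmass x).summable.mul_left C)
  calc PopOp p m g x ≤ ∑' y, C * (p x y * m y) :=
        hsum.tsum_le_tsum (kernel_mul_le_of_le hm hp0 hgC x) ((hmass x).summable.mul_left C)
    _ = C := by rw [tsum_mul_left, (hmass x).tsum_eq, mul_one]

theorem hasSum_popOp_mul (hm : ∀ x, 0 ≤ m x) (hp0 : ∀ x y, 0 ≤ p x y)
    (hsym : ∀ x y, p x y = p y x) (hmass : ∀ x, HasSum (fun y => p x y * m y) 1)
    {g : Γ → ℝ} (hg0 : ∀ y, 0 ≤ g y) (hg : Summable fun y => g y * m y) :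
    HasSum (fun x => PopOp p m g x * m x) (∑' y, g y * m y) := by
  set H : Γ × Γ → ℝ := fun z => g z.1 * m z.1 * (p z.1 z.2 * m z.2)
  have hH0 : 0 ≤ H := fun z =>
    mul_nonneg (mul_nonneg (hg0 z.1) (hm z.1)) (mul_nonneg (hp0 z.1 z.2) (hm z.2))
  have hcol : ∀ y, HasSum (fun x => H (y, x)) (g y * m y) := fun y => by
    simpa [H] using (hmass y).mul_left (g y * m y)
  have hHsum : Summable H := (summable_prod_of_nonneg hH0).2
    ⟨fun y => (hcol y).summable, hg.congr fun y => (hcol y).tsum_eq.symm⟩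
  have hH : HasSum H (∑' y, g y * m y) := by
    rw [(hHsum.hasSum.prod_fiberwise hcol).tsum_eq]
    exact hHsum.hasSum
  have hrow : ∀ x, (fun y => H (y, x)) = fun y => p x y * g y * m y * m x := fun x => by
    funext y; simp only [H, hsym x y]; ring
  have hswap : HasSum (fun z : Γ × Γ => H (z.2, z.1)) (∑' y, g y * m y) :=
    (Equiv.prodComm Γ Γ).hasSum_iff.2 hH
  refine hswap.prod_fiberwise fun x => ?_
  have hsx : Summable fun y => H (y, x) := hswap.summable.prod_factor x
  rw [hrow x] at hsx ⊢
  simpa only [PopOp, tsum_mul_right] using hsx.hasSum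

end MarkovKernel

section Iterates

variable {Γ : Type*} {m : Γ → ℝ} {p : Γ → Γ → ℝ} {f : Γ → ℝ}

theorem iterate_popOp_nonneg (hm : ∀ x, 0 ≤ m x) (hp0 : ∀ x y, 0 ≤ p x y)
    (hf0 : ∀ x, 0 ≤ f x) (n : ℕ) (x : Γ) : 0 ≤ (PopOp p m)^[n] f x := by
  induction n generalizing x with
  | zero => exact hf0 x
  | succ n ih =>
    rw [Function.iterate_succ_apply']
    exact popOp_nonneg hm hp0 ih x

theorem iterate_popOp_le (hm : ∀ x, 0 ≤ m x) (hp0 : ∀ x y, 0 ≤ p x y)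
    (hmass : ∀ x, HasSum (fun y => p x y * m y) 1) (hf0 : ∀ x, 0 ≤ f x) {B : ℝ}
    (hfB : ∀ x, f x ≤ B) (n : ℕ) (x : Γ) : (PopOp p m)^[n] f x ≤ B := by
  induction n generalizing x with
  | zero => exact hfB x
  | succ n ih =>
    rw [Function.iterate_succ_apply']
    exact popOp_le hm hp0 hmass (iterate_popOp_nonneg hm hp0 hf0 n) ih x

theorem summable_iterate_popOp_mul (hm : ∀ x, 0 ≤ m x) (hp0 : ∀ x y, 0 ≤ p x y)
    (hsym : ∀ x y, p x y = p y x) (hmass : ∀ x, HasSum (fun y => p x y * m y) 1)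
    (hf0 : ∀ x, 0 ≤ f x) (hf1 : Summable fun x => f x * m x) (n : ℕ) :
    Summable fun x => (PopOp p m)^[n] f x * m x := by
  induction n with
  | zero => exact hf1
  | succ n ih =>
    simp only [Function.iterate_succ_apply']
    exact (hasSum_popOp_mul hm hp0 hsym hmass (iterate_popOp_nonneg hm hp0 hf0 n) ih).summable

end Iterates

theorem summable_rpow_mul_of_le {Γ : Type*} {m h : Γ → ℝ} {C q : ℝ} (hq : 1 ≤ q)
    (hm : ∀ x, 0 ≤ m x) (h0 : ∀ x, 0 ≤ h x) (hC : ∀ x, h x ≤ C)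
    (hs : Summable fun x => h x * m x) : Summable fun x => h x ^ q * m x := by
  refine Summable.of_nonneg_of_le (fun x => mul_nonneg (Real.rpow_nonneg (h0 x) q) (hm x))
    (fun x => ?_) (hs.mul_left (C ^ (q - 1)))
  have hpow : h x ^ q = h x ^ (q - 1) * h x := by
    rw [← Real.rpow_add_one' (h0 x) (by linarith), sub_add_cancel]
  calc h x ^ q * m x = h x ^ (q - 1) * h x * m x := by rw [hpow]
    _ ≤ C ^ (q - 1) * h x * m x := mul_le_mul_of_nonneg_right
        (mul_le_mul_of_nonneg_right (Real.rpow_le_rpow (h0 x) (hC x) (by linarith)) (h0 x)) (hm x)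
    _ = C ^ (q - 1) * (h x * m x) := mul_assoc _ _ _

theorem tsum_tsum_le_of_sum_range_le {Γ : Type*} {a : ℕ → Γ → ℝ} {c : ℝ}
    (ha0 : ∀ n x, 0 ≤ a n x) (hs : ∀ n, Summable (a n))
    (h : ∀ N, ∑ n ∈ range N, ∑' x, a n x ≤ c) : ∑' x, ∑' n, a n x ≤ c := by
  have hsum : Summable (Function.uncurry a) :=
    (summable_prod_of_nonneg fun z => ha0 z.1 z.2).2
      ⟨hs, summable_of_sum_range_le (fun n => tsum_nonneg (ha0 n)) h⟩
  rw [hsum.tsum_comm]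
  exact Real.tsum_le_of_sum_range_le (fun n => tsum_nonneg (ha0 n)) h

theorem stmt18_general {Γ : Type*} (m : Γ → ℝ) (hm : ∀ x, 0 < m x)
    (p : Γ → Γ → ℝ) (hp0 : ∀ x y, 0 ≤ p x y) (hsym : ∀ x y, p x y = p y x)
    (hmass : ∀ x, HasSum (fun y => p x y * m y) 1)
    (q : ℝ) (hq : 1 < q)
    (f : Γ → ℝ) (hf0 : ∀ x, 0 ≤ f x) (hf1 : Summable (fun x => f x * m x))
    (B : ℝ) (hfB : ∀ x, f x ≤ B)
    (hterm_nonneg : ∀ (x : Γ) (n : ℕ),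
      0 ≤ PopOp p m (fun y => ((PopOp p m)^[n] f y) ^ q) x - ((PopOp p m)^[n + 1] f x) ^ q) :
    (∑' x : Γ, m x * ∑' n : ℕ,
      (PopOp p m (fun y => ((PopOp p m)^[n] f y) ^ q) x - ((PopOp p m)^[n + 1] f x) ^ q)) ≤
      ∑' x : Γ, (f x) ^ q * m x := by
  have hm0 : ∀ x, 0 ≤ m x := fun x => (hm x).le
  set u : ℕ → Γ → ℝ := fun n x => ((PopOp p m)^[n] f x) ^ q
  set S : ℕ → ℝ := fun n => ∑' x, u n x * m x
  have hu0 : ∀ n x, 0 ≤ u n x := fun n x =>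
    Real.rpow_nonneg (iterate_popOp_nonneg hm0 hp0 hf0 n x) q
  have hu : ∀ n, Summable fun x => u n x * m x := fun n =>
    summable_rpow_mul_of_le hq.le hm0 (iterate_popOp_nonneg hm0 hp0 hf0 n)
      (iterate_popOp_le hm0 hp0 hmass hf0 hfB n)
      (summable_iterate_popOp_mul hm0 hp0 hsym hmass hf0 hf1 n)
  have hterm : ∀ n,
      HasSum (fun x => m x * (PopOp p m (u n) x - u (n + 1) x)) (S n - S (n + 1)) := fun n =>
    ((hasSum_popOp_mul hm0 hp0 hsym hmass (hu0 n) (hu n)).sub (hu (n + 1)).hasSum).congr_fun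
      fun x => by ring
  calc ∑' x, m x * ∑' n, (PopOp p m (u n) x - u (n + 1) x)
      = ∑' x, ∑' n, m x * (PopOp p m (u n) x - u (n + 1) x) :=
        tsum_congr fun x => tsum_mul_left.symm
    _ ≤ S 0 := by
        refine tsum_tsum_le_of_sum_range_le (fun n x => mul_nonneg (hm0 x) (hterm_nonneg x n))
          (fun n => (hterm n).summable) fun N => ?_
        simp only [(hterm _).tsum_eq, sum_range_sub']
        linarith [show 0 ≤ S N from tsum_nonneg fun x => mul_nonneg (hu0 N x) (hm0 x)]

theorem stmt18 {Γ : Type*} [Countable Γ] (m : Γ → ℝ) (hm : ∀ x, 0 < m x)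
    (p : Γ → Γ → ℝ) (hp0 : ∀ x y, 0 ≤ p x y) (hsym : ∀ x y, p x y = p y x)
    (hmass : ∀ x, HasSum (fun y => p x y * m y) 1)
    (q : ℝ) (hq : 1 < q) (hq2 : q ≤ 2)
    (f : Γ → ℝ) (hf0 : ∀ x, 0 ≤ f x) (hf1 : Summable (fun x => f x * m x))
    (B : ℝ) (hfB : ∀ x, f x ≤ B)
    (hterm_nonneg : ∀ (x : Γ) (n : ℕ),
      0 ≤ PopOp p m (fun y => ((PopOp p m)^[n] f y) ^ q) x - ((PopOp p m)^[n + 1] f x) ^ q) :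
    (∑' x : Γ, m x * ∑' n : ℕ,
      (PopOp p m (fun y => ((PopOp p m)^[n] f y) ^ q) x - ((PopOp p m)^[n + 1] f x) ^ q)) ≤
      ∑' x : Γ, (f x) ^ q * m x :=
  stmt18_general m hm p hp0 hsym hmass q hq f hf0 hf1 B hfB hterm_nonneg
end
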